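/- arXiv:2206.05925 — 4 statements merged into one kernel-verified Lean document; each statement's English description precedes it below -/
import Mathlib

section
/- Every symmetric super-biderivation φ of the N=2 Ramond algebra 𝔑 (homogeneous of either ℤ/2-degree, with 𝔑 acting on itself by the adjoint action) is trivial, i.e. φ(x, y) = 0 for all x, y ∈ 𝔑. -/
/-!
For homogeneous `x`, `φ x` is a super-derivation; applied to `[L₀, z]` and `[H₀, z]` for a basis
vector `z`, this expresses the coordinates of `φ(x, z)` outside the weight (resp. charge) of `z`
through `φ(x, L₀)` (resp. `φ(x, H₀)`). For `x = L₀`, together with symmetry, this forces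
`φ(L₀, L₀)` and `φ(L₀, H₀)` to be multiples of the central element `C`, so `φ(L₀, ·)` preserves
weight and charge. Since the parity of a basis vector is its charge mod 2, this kills `φ(L₀, ·)`
when `φ` is odd; when `φ` is even, the symmetry `φ(L_k, z) = φ(z, L_k)` computes the
weight-shifted part of `φ(L_k, z)` in two ways, and the resulting linear relations kill the
remaining diagonal coefficients.

Once `φ(L₀, ·) = 0`, each `φ(a, j)` lies in the weight spaces of both `a` and `j`, so it vanishes
unless they have equal weight; in that case `j` is, modulo `C`, a multiple of a bracket of basis
vectors of other weights, and `φ(·, C) = 0` because `φ([x, y], C) = 0` and `𝔑` is perfect.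
-/

open Module Submodule

lemma Module.Basis.repr_apply_eq_of_forall_basis {ι R M : Type*} [CommSemiring R]
    [AddCommMonoid M] [Module R M] (b : Basis ι R M) {f : M →ₗ[R] M} {i : ι} {ℓ : M →ₗ[R] R}
    (h : ∀ j, b.repr (f (b j)) i = ℓ (b j)) (v : M) : b.repr (f v) i = ℓ v :=
  LinearMap.congr_fun (b.ext (f₁ := (b.coord i).comp f) (f₂ := ℓ) h) v

lemma Module.Basis.repr_map_of_eigen {ι R M : Type*} [CommSemiring R] [AddCommMonoid M]
    [Module R M] (b : Basis ι R M) {f : M →ₗ[R] M} {w : ι → R} (hf : ∀ j, f (b j) = w j • b j)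
    (v : M) (i : ι) : b.repr (f v) i = w i * b.repr v i :=
  b.repr_apply_eq_of_forall_basis (ℓ := w i • b.coord i) (fun j => by
    by_cases h : j = i <;> simp [hf, h]) v

lemma Module.Basis.eq_repr_smul_of_repr_eq_zero {ι R M : Type*} [CommSemiring R]
    [AddCommMonoid M] [Module R M] (b : Basis ι R M) {v : M} {i₀ : ι}
    (h : ∀ i ≠ i₀, b.repr v i = 0) : v = b.repr v i₀ • b i₀ :=
  b.ext_elem fun i => by
    by_cases hi : i = i₀
    · subst hi; simp
    · simp [h i hi, Ne.symm hi]

lemma ZMod.eq_zero_or_one (p : ZMod 2) : p = 0 ∨ p = 1 := by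
  revert p; decide

lemma half_sub_intCast_ne_zero (q : ℤ) : (1 / 2 - q : ℂ) ≠ 0 := by
  intro h
  have : ((2 * q : ℤ) : ℂ) = 1 := by push_cast; linear_combination -2 * h
  have : 2 * q = 1 := by exact_mod_cast this
  omega

def superSign (p : ZMod 2) : ℂ := if p = 1 then -1 else 1

@[simp] lemma superSign_zero : superSign 0 = 1 := by simp [superSign]

@[simp] lemma superSign_one : superSign 1 = -1 := by simp [superSign]

lemma superSign_ne_zero (p : ZMod 2) : superSign p ≠ 0 := by
  unfold superSign; split_ifs <;> norm_num

section SuperBiderivation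

variable {V : Type*} [AddCommGroup V] [Module ℂ V]

structure IsSymmetricSuperBiderivation (br : V →ₗ[ℂ] V →ₗ[ℂ] V)
    (Vsub : ZMod 2 → Submodule ℂ V) (φ : V →ₗ[ℂ] V →ₗ[ℂ] V) (d : ZMod 2) : Prop where
  mem : ∀ p q : ZMod 2, ∀ x ∈ Vsub p, ∀ y ∈ Vsub q, φ x y ∈ Vsub (p + q + d)
  map_br_left : ∀ p q t : ZMod 2, ∀ x ∈ Vsub p, ∀ y ∈ Vsub q, ∀ z ∈ Vsub t,
    φ (br x y) z = superSign (d * p) • br x (φ y z) - superSign (q * (d + p)) • br y (φ x z)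
  map_br_right : ∀ p q t : ZMod 2, ∀ x ∈ Vsub p, ∀ y ∈ Vsub q, ∀ z ∈ Vsub t,
    φ x (br y z) = superSign ((d + p) * q) • br y (φ x z) -
      superSign (t * (d + p + q)) • br z (φ x y)
  symm : ∀ p q : ZMod 2, ∀ x ∈ Vsub p, ∀ y ∈ Vsub q, φ x y = superSign (p * q) • φ y x

namespace IsSymmetricSuperBiderivation

variable {br : V →ₗ[ℂ] V →ₗ[ℂ] V} {Vsub : ZMod 2 → Submodule ℂ V} {φ : V →ₗ[ℂ] V →ₗ[ℂ] V}
  {d : ZMod 2} (hφ : IsSymmetricSuperBiderivation br Vsub φ d)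
include hφ

lemma symm_of_even_left {x y : V} {q : ZMod 2} (hx : x ∈ Vsub 0) (hy : y ∈ Vsub q) :
    φ x y = φ y x := by
  simpa using hφ.symm 0 q x hx y hy

lemma br_apply_sub_smul {T y x : V} {t p : ZMod 2} {c : ℂ} (hT : T ∈ Vsub 0)
    (hy : y ∈ Vsub t) (hx : x ∈ Vsub p) (hTy : br T y = c • y) :
    br T (φ x y) - c • φ x y = superSign (t * (d + p)) • br y (φ x T) := by
  have h := hφ.map_br_right p 0 t x hx T hT y hy
  simp only [hTy, map_smul, mul_zero, superSign_zero, one_smul, add_zero] at h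
  rw [h]; abel

lemma br_apply_central_eq_zero {C x y : V} {p q : ZMod 2} (hC : C ∈ Vsub 0)
    (hxC : ∀ v, br v C = 0) (hCx : ∀ v, br C v = 0) (hx : x ∈ Vsub p) (hy : y ∈ Vsub q) :
    br y (φ x C) = 0 := by
  have h := hφ.map_br_right p q 0 x hx y hy C hC
  rw [hxC, map_zero, hCx, smul_zero, sub_zero, eq_comm, smul_eq_zero] at h
  exact h.resolve_left (superSign_ne_zero _)

lemma apply_br_central_eq_zero {C x y : V} {p q : ZMod 2} (hC : C ∈ Vsub 0)
    (hxC : ∀ v, br v C = 0) (hCx : ∀ v, br C v = 0) (hx : x ∈ Vsub p) (hy : y ∈ Vsub q) :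
    φ (br x y) C = 0 := by
  rw [hφ.map_br_left p q 0 x hx y hy C hC, hφ.br_apply_central_eq_zero hC hxC hCx hy hx,
    hφ.br_apply_central_eq_zero hC hxC hCx hx hy, smul_zero, smul_zero, sub_zero]

end IsSymmetricSuperBiderivation

end SuperBiderivation

namespace N2Ramond

abbrev Index : Type := ((ℤ ⊕ ℤ) ⊕ Unit) ⊕ (ℤ ⊕ ℤ)

abbrev iL (m : ℤ) : Index := .inl (.inl (.inl m))
abbrev iH (m : ℤ) : Index := .inl (.inl (.inr m))
abbrev iC : Index := .inl (.inr ())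
-- `iP p` and `iM p` index `G⁺_p` and `G⁻_p`.
abbrev iP (p : ℤ) : Index := .inr (.inl p)
abbrev iM (p : ℤ) : Index := .inr (.inr p)

def weight : Index → ℤ
  | .inl (.inl (.inl m)) => -m
  | .inl (.inl (.inr m)) => -m
  | .inl (.inr _) => 0
  | .inr (.inl p) => -p
  | .inr (.inr p) => -p

def charge : Index → ℤ
  | .inl _ => 0
  | .inr (.inl _) => 1
  | .inr (.inr _) => -1

def parity : Index → ZMod 2
  | .inl _ => 0
  | .inr _ => 1

@[simp] lemma weight_iL (m : ℤ) : weight (iL m) = -m := rfl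
@[simp] lemma weight_iH (m : ℤ) : weight (iH m) = -m := rfl
@[simp] lemma weight_inl_inr (u : Unit) : weight (.inl (.inr u)) = 0 := rfl
@[simp] lemma weight_iP (p : ℤ) : weight (iP p) = -p := rfl
@[simp] lemma weight_iM (p : ℤ) : weight (iM p) = -p := rfl
@[simp] lemma charge_iL (m : ℤ) : charge (iL m) = 0 := rfl
@[simp] lemma charge_iH (m : ℤ) : charge (iH m) = 0 := rfl
@[simp] lemma charge_inl_inr (u : Unit) : charge (.inl (.inr u)) = 0 := rfl
@[simp] lemma charge_iP (p : ℤ) : charge (iP p) = 1 := rfl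
@[simp] lemma charge_iM (p : ℤ) : charge (iM p) = -1 := rfl
@[simp] lemma parity_inl (i : (ℤ ⊕ ℤ) ⊕ Unit) : parity (.inl i) = 0 := rfl
@[simp] lemma parity_inr (j : ℤ ⊕ ℤ) : parity (.inr j) = 1 := rfl

lemma parity_eq_of_charge_eq {i j : Index} (h : charge i = charge j) : parity i = parity j := by
  rcases i with ((_ | _) | _) | (_ | _) <;> rcases j with ((_ | _) | _) | (_ | _) <;>
    simp_all [charge]

variable {V : Type*} [AddCommGroup V] [Module ℂ V]

structure IsN2Ramond (bV : Basis Index ℂ V) (br : V →ₗ[ℂ] V →ₗ[ℂ] V)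
    (Vsub : ZMod 2 → Submodule ℂ V) : Prop where
  even : Vsub 0 = span ℂ (Set.range fun i : (ℤ ⊕ ℤ) ⊕ Unit => bV (.inl i))
  odd : Vsub 1 = span ℂ (Set.range fun j : ℤ ⊕ ℤ => bV (.inr j))
  br_L_L : ∀ m n : ℤ, br (bV (iL m)) (bV (iL n)) = ((m : ℂ) - n) • bV (iL (m + n)) +
    (if m + n = 0 then ((m : ℂ) ^ 3 - m) / 12 else 0) • bV iC
  br_H_H : ∀ m n : ℤ, br (bV (iH m)) (bV (iH n)) = (if m + n = 0 then (m : ℂ) / 3 else 0) • bV iC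
  br_L_H : ∀ m n : ℤ, br (bV (iL m)) (bV (iH n)) = (-(n : ℂ)) • bV (iH (m + n))
  br_L_P : ∀ m p : ℤ, br (bV (iL m)) (bV (iP p)) = ((m : ℂ) / 2 - p) • bV (iP (p + m))
  br_L_M : ∀ m p : ℤ, br (bV (iL m)) (bV (iM p)) = ((m : ℂ) / 2 - p) • bV (iM (p + m))
  br_H_P : ∀ m p : ℤ, br (bV (iH m)) (bV (iP p)) = bV (iP (m + p))
  br_H_M : ∀ m p : ℤ, br (bV (iH m)) (bV (iM p)) = -bV (iM (m + p))
  br_P_M : ∀ p q : ℤ, br (bV (iP p)) (bV (iM q)) = (2 : ℂ) • bV (iL (p + q)) +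
    ((p : ℂ) - q) • bV (iH (p + q)) + (if p + q = 0 then ((p : ℂ) ^ 2 - 1 / 4) / 3 else 0) • bV iC
  br_P_P : ∀ p q : ℤ, br (bV (iP p)) (bV (iP q)) = 0
  br_M_M : ∀ p q : ℤ, br (bV (iM p)) (bV (iM q)) = 0
  br_C : ∀ x : V, br x (bV iC) = 0
  skew : ∀ p q : ZMod 2, ∀ x ∈ Vsub p, ∀ y ∈ Vsub q, br x y = (-(superSign (p * q))) • br y x

namespace IsN2Ramond

variable {bV : Basis Index ℂ V} {br : V →ₗ[ℂ] V →ₗ[ℂ] V} {Vsub : ZMod 2 → Submodule ℂ V}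
  (hA : IsN2Ramond bV br Vsub)
include hA

lemma mem_basis (i : Index) : bV i ∈ Vsub (parity i) := by
  rcases i with i | i
  · rw [parity_inl, hA.even]; exact subset_span ⟨i, rfl⟩
  · rw [parity_inr, hA.odd]; exact subset_span ⟨i, rfl⟩

lemma repr_eq_zero_of_mem {v : V} {p : ZMod 2} {i : Index} (hv : v ∈ Vsub p)
    (hi : parity i ≠ p) : bV.repr v i = 0 := by
  have key : ∀ s : Set Index, v ∈ span ℂ (bV '' s) → i ∉ s → bV.repr v i = 0 := fun s hs his =>
    Finsupp.notMem_support_iff.mp fun h => his (bV.repr_support_subset_of_mem_span s hs h)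
  obtain rfl | rfl := ZMod.eq_zero_or_one p
  · rcases i with i | i
    · simp at hi
    · rw [hA.even] at hv
      exact key _ (by rw [← Set.range_comp]; exact hv) (by simp)
  · rcases i with i | i
    · rw [hA.odd] at hv
      exact key _ (by rw [← Set.range_comp]; exact hv) (by simp)
    · simp at hi

lemma br_basis_comm (i j : Index) :
    br (bV i) (bV j) = -superSign (parity i * parity j) • br (bV j) (bV i) :=
  hA.skew _ _ _ (hA.mem_basis i) _ (hA.mem_basis j)

lemma br_C_left (v : V) : br (bV iC) v = 0 := by
  have : br (bV iC) = 0 := bV.ext fun j => by simp [hA.br_basis_comm iC j, hA.br_C]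
  simp [this]

lemma br_H_L (m k : ℤ) : br (bV (iH m)) (bV (iL k)) = (m : ℂ) • bV (iH (m + k)) := by
  simp [hA.br_basis_comm (iH m), hA.br_L_H, add_comm]

lemma br_P_L (q k : ℤ) : br (bV (iP q)) (bV (iL k)) = ((q : ℂ) - k / 2) • bV (iP (q + k)) := by
  rw [hA.br_basis_comm, hA.br_L_P]; simp [smul_smul]

lemma br_P_H (q k : ℤ) : br (bV (iP q)) (bV (iH k)) = -bV (iP (q + k)) := by
  simp [hA.br_basis_comm (iP q), hA.br_H_P, add_comm]

lemma br_M_L (q k : ℤ) : br (bV (iM q)) (bV (iL k)) = ((q : ℂ) - k / 2) • bV (iM (q + k)) := by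
  rw [hA.br_basis_comm, hA.br_L_M]; simp [smul_smul]

lemma br_M_H (q k : ℤ) : br (bV (iM q)) (bV (iH k)) = bV (iM (q + k)) := by
  simp [hA.br_basis_comm (iM q), hA.br_H_M, add_comm]

lemma br_M_P (q s : ℤ) : br (bV (iM q)) (bV (iP s)) = br (bV (iP s)) (bV (iM q)) := by
  simp [hA.br_basis_comm (iM q)]

lemma br_L0 (i : Index) : br (bV (iL 0)) (bV i) = (weight i : ℂ) • bV i := by
  rcases i with ((k | k) | ⟨⟩) | (k | k) <;>
    simp [hA.br_L_L, hA.br_L_H, hA.br_L_P, hA.br_L_M, hA.br_C]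

lemma br_H0 (i : Index) : br (bV (iH 0)) (bV i) = (charge i : ℂ) • bV i := by
  rcases i with ((k | k) | ⟨⟩) | (k | k) <;>
    simp [hA.br_H_L, hA.br_H_H, hA.br_H_P, hA.br_H_M, hA.br_C]

lemma repr_br_L0 (v : V) (i : Index) :
    bV.repr (br (bV (iL 0)) v) i = weight i * bV.repr v i :=
  bV.repr_map_of_eigen hA.br_L0 v i

lemma repr_br_H0 (v : V) (i : Index) :
    bV.repr (br (bV (iH 0)) v) i = charge i * bV.repr v i :=
  bV.repr_map_of_eigen hA.br_H0 v i

lemma repr_br_L_iL (m k : ℤ) (v : V) :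
    bV.repr (br (bV (iL m)) v) (iL (m + k)) = ((m : ℂ) - k) * bV.repr v (iL k) :=
  bV.repr_apply_eq_of_forall_basis (ℓ := ((m : ℂ) - k) • bV.coord (iL k)) (fun j => by
    rcases j with ((j | j) | u) | (j | j) <;> simp [hA.br_L_L, hA.br_L_H, hA.br_L_P,
      hA.br_L_M, hA.br_C, Finsupp.single_apply, apply_ite bV.repr]
    grind) v

lemma repr_br_L_iH (m k : ℤ) (v : V) :
    bV.repr (br (bV (iL m)) v) (iH (m + k)) = -(k : ℂ) * bV.repr v (iH k) :=
  bV.repr_apply_eq_of_forall_basis (ℓ := (-(k : ℂ)) • bV.coord (iH k)) (fun j => by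
    rcases j with ((j | j) | u) | (j | j) <;> simp [hA.br_L_L, hA.br_L_H, hA.br_L_P,
      hA.br_L_M, hA.br_C, Finsupp.single_apply, apply_ite bV.repr] <;> grind) v

lemma repr_br_L_iP (m k : ℤ) (v : V) :
    bV.repr (br (bV (iL m)) v) (iP (k + m)) = ((m : ℂ) / 2 - k) * bV.repr v (iP k) :=
  bV.repr_apply_eq_of_forall_basis (ℓ := ((m : ℂ) / 2 - k) • bV.coord (iP k)) (fun j => by
    rcases j with ((j | j) | u) | (j | j) <;> simp [hA.br_L_L, hA.br_L_H, hA.br_L_P,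
      hA.br_L_M, hA.br_C, Finsupp.single_apply, apply_ite bV.repr] <;> grind) v

lemma repr_br_L_iM (m k : ℤ) (v : V) :
    bV.repr (br (bV (iL m)) v) (iM (k + m)) = ((m : ℂ) / 2 - k) * bV.repr v (iM k) :=
  bV.repr_apply_eq_of_forall_basis (ℓ := ((m : ℂ) / 2 - k) • bV.coord (iM k)) (fun j => by
    rcases j with ((j | j) | u) | (j | j) <;> simp [hA.br_L_L, hA.br_L_H, hA.br_L_P,
      hA.br_L_M, hA.br_C, Finsupp.single_apply, apply_ite bV.repr] <;> grind) v

lemma repr_br_H_iL (m k : ℤ) (v : V) : bV.repr (br (bV (iH m)) v) (iL k) = 0 :=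
  bV.repr_apply_eq_of_forall_basis (ℓ := 0) (fun j => by
    rcases j with ((j | j) | u) | (j | j) <;> simp [hA.br_H_L, hA.br_H_H, hA.br_H_P,
      hA.br_H_M, hA.br_C, apply_ite bV.repr]
    grind) v

lemma repr_br_H_iH (m k : ℤ) (v : V) :
    bV.repr (br (bV (iH m)) v) (iH (m + k)) = m * bV.repr v (iL k) :=
  bV.repr_apply_eq_of_forall_basis (ℓ := (m : ℂ) • bV.coord (iL k)) (fun j => by
    rcases j with ((j | j) | u) | (j | j) <;> simp [hA.br_H_L, hA.br_H_H, hA.br_H_P,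
      hA.br_H_M, hA.br_C, Finsupp.single_apply, apply_ite bV.repr]
    grind) v

lemma repr_br_P_iP (q k : ℤ) (v : V) :
    bV.repr (br (bV (iP q)) v) (iP (q + k)) =
      ((q : ℂ) - k / 2) * bV.repr v (iL k) - bV.repr v (iH k) :=
  bV.repr_apply_eq_of_forall_basis
    (ℓ := ((q : ℂ) - k / 2) • bV.coord (iL k) - bV.coord (iH k)) (fun j => by
      rcases j with ((j | j) | u) | (j | j) <;> simp [hA.br_P_L, hA.br_P_H, hA.br_P_P,
        hA.br_P_M, hA.br_C, Finsupp.single_apply, apply_ite bV.repr] <;> grind) v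

lemma repr_br_M_iM (q k : ℤ) (v : V) :
    bV.repr (br (bV (iM q)) v) (iM (q + k)) =
      ((q : ℂ) - k / 2) * bV.repr v (iL k) + bV.repr v (iH k) :=
  bV.repr_apply_eq_of_forall_basis
    (ℓ := ((q : ℂ) - k / 2) • bV.coord (iL k) + bV.coord (iH k)) (fun j => by
      rcases j with ((j | j) | u) | (j | j) <;> simp [hA.br_M_L, hA.br_M_H, hA.br_M_P,
        hA.br_M_M, hA.br_P_M, hA.br_C, Finsupp.single_apply, apply_ite bV.repr] <;> grind) v

lemma basis_C_eq :
    bV iC = (2 : ℂ) • br (bV (iL 2)) (bV (iL (-2))) - (4 : ℂ) • br (bV (iL 1)) (bV (iL (-1))) := by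
  simp only [hA.br_L_L]
  norm_num
  module

/-- Modulo `C`, a basis vector of mode `n` is a nonzero multiple of a bracket of basis vectors of
modes `s` and `n - s`, where `s = 3n + 1` avoids `0`, `n` and `n / 2`; so both factors have a
weight different from its own. -/
lemma map_basis_eq_zero_of_map_br {W : Type*} [AddCommGroup W] [Module ℂ W] (f : V →ₗ[ℂ] W)
    (hC : f (bV iC) = 0) (j : Index)
    (h : ∀ y z, weight y ≠ weight j → weight z ≠ weight j → f (br (bV y) (bV z)) = 0) :
    f (bV j) = 0 := by
  have hs : ∀ n : ℤ, ∃ s : ℤ, s ≠ 0 ∧ s ≠ n ∧ 2 * s ≠ n := fun n =>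
    ⟨3 * n + 1, by omega, by omega, by omega⟩
  rcases j with ((n | n) | ⟨⟩) | (n | n)
  · obtain ⟨s, hs0, hsn, h2s⟩ := hs n
    have := h (iL s) (iL (n - s)) (by simpa using hsn) (by simpa using hs0)
    rw [hA.br_L_L, add_sub_cancel, map_add, map_smul, map_smul, hC, smul_zero, add_zero] at this
    exact (smul_eq_zero.mp this).resolve_left (by push_cast; norm_cast; omega)
  · obtain ⟨s, hs0, hsn, -⟩ := hs n
    have := h (iL s) (iH (n - s)) (by simpa using hsn) (by simpa using hs0)
    rw [hA.br_L_H, add_sub_cancel, map_smul] at this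
    exact (smul_eq_zero.mp this).resolve_left (by push_cast; norm_cast; omega)
  · exact hC
  · obtain ⟨s, hs0, hsn, -⟩ := hs n
    simpa [hA.br_H_P] using h (iH s) (iP (n - s)) (by simpa using hsn) (by simpa using hs0)
  · obtain ⟨s, hs0, hsn, -⟩ := hs n
    simpa [hA.br_H_M] using h (iH s) (iM (n - s)) (by simpa using hsn) (by simpa using hs0)

lemma eq_zero_of_map_br {W : Type*} [AddCommGroup W] [Module ℂ W] (f : V →ₗ[ℂ] W)
    (h : ∀ y z, f (br (bV y) (bV z)) = 0) : f = 0 := by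
  have hC : f (bV iC) = 0 := by simp [hA.basis_C_eq, h]
  exact bV.ext fun j => hA.map_basis_eq_zero_of_map_br f hC j fun y z _ _ => h y z

lemma repr_eq_zero_of_weight_eq_zero {v : V}
    (hv : ∀ j i, weight i = weight j → bV.repr (br (bV j) v) i = 0)
    {i : Index} (hi : weight i = 0) (hiC : i ≠ iC) : bV.repr v i = 0 := by
  have hL : bV.repr v (iL 0) = 0 := by
    have := hv (iL 1) (iL (1 + 0)) (by simp)
    rw [hA.repr_br_L_iL] at this
    simpa using this
  rcases i with ((n | n) | ⟨⟩) | (n | n)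
  · obtain rfl : n = 0 := by simpa using hi
    exact hL
  · obtain rfl : n = 0 := by simpa using hi
    have := hv (iP 0) (iP (0 + 0)) (by simp)
    rw [hA.repr_br_P_iP] at this
    simpa [hL] using this
  · exact absurd rfl hiC
  · obtain rfl : n = 0 := by simpa using hi
    have := hv (iL 2) (iP (0 + 2)) (by simp)
    rw [hA.repr_br_L_iP] at this
    norm_num at this
    exact this
  · obtain rfl : n = 0 := by simpa using hi
    have := hv (iL 2) (iM (0 + 2)) (by simp)
    rw [hA.repr_br_L_iM] at this
    norm_num at this
    exact this

lemma repr_eq_zero_of_weight_ne_zero {v : V}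
    (hv : ∀ j i, weight i = 0 → i ≠ iC → bV.repr (br (bV j) v) i = 0)
    {i : Index} (hi : weight i ≠ 0) : bV.repr v i = 0 := by
  rcases i with ((k | k) | ⟨⟩) | (k | k) <;> simp only [weight_iL, weight_iH, weight_iP,
    weight_iM, weight_inl_inr, ne_eq, neg_eq_zero, not_true_eq_false] at hi
  · have := hv (iL (-k)) (iL (-k + k)) (by simp) (by simp)
    rw [hA.repr_br_L_iL] at this
    exact (mul_eq_zero.mp this).resolve_left (by push_cast; norm_cast; omega)
  · have := hv (iL (-k)) (iH (-k + k)) (by simp) (by simp)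
    rw [hA.repr_br_L_iH] at this
    exact (mul_eq_zero.mp this).resolve_left (by simpa using hi)
  · have := hv (iL (-k)) (iP (k + -k)) (by simp) (by simp)
    rw [hA.repr_br_L_iP] at this
    refine (mul_eq_zero.mp this).resolve_left ?_
    push_cast
    intro h
    exact hi (by exact_mod_cast (by linear_combination -2 / 3 * h : (k : ℂ) = 0))
  · have := hv (iL (-k)) (iM (k + -k)) (by simp) (by simp)
    rw [hA.repr_br_L_iM] at this
    refine (mul_eq_zero.mp this).resolve_left ?_
    push_cast
    intro h
    exact hi (by exact_mod_cast (by linear_combination -2 / 3 * h : (k : ℂ) = 0))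

section Biderivation

variable {φ : V →ₗ[ℂ] V →ₗ[ℂ] V} {d : ZMod 2} (hφ : IsSymmetricSuperBiderivation br Vsub φ d)
include hφ

lemma apply_C_eq_zero (x : V) : φ x (bV iC) = 0 := by
  have hC : bV iC ∈ Vsub 0 := hA.mem_basis iC
  have : φ.flip (bV iC) = 0 := hA.eq_zero_of_map_br _ fun y z =>
    hφ.apply_br_central_eq_zero hC hA.br_C hA.br_C_left (hA.mem_basis y) (hA.mem_basis z)
  simpa using LinearMap.congr_fun this x

lemma weight_sub_mul_repr {x : V} {p : ZMod 2} (hx : x ∈ Vsub p) (j i : Index) :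
    ((weight i : ℂ) - weight j) * bV.repr (φ x (bV j)) i =
      superSign (parity j * (d + p)) * bV.repr (br (bV j) (φ x (bV (iL 0)))) i := by
  have h := congrArg (fun v => bV.repr v i)
    (hφ.br_apply_sub_smul (hA.mem_basis (iL 0)) (hA.mem_basis j) hx (hA.br_L0 j))
  simp only [map_sub, map_smul, Finsupp.sub_apply, Finsupp.smul_apply, smul_eq_mul,
    hA.repr_br_L0] at h
  linear_combination h

lemma charge_sub_mul_repr {x : V} {p : ZMod 2} (hx : x ∈ Vsub p) (j i : Index) :
    ((charge i : ℂ) - charge j) * bV.repr (φ x (bV j)) i =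
      superSign (parity j * (d + p)) * bV.repr (br (bV j) (φ x (bV (iH 0)))) i := by
  have h := congrArg (fun v => bV.repr v i)
    (hφ.br_apply_sub_smul (hA.mem_basis (iH 0)) (hA.mem_basis j) hx (hA.br_H0 j))
  simp only [map_sub, map_smul, Finsupp.sub_apply, Finsupp.smul_apply, smul_eq_mul,
    hA.repr_br_H0] at h
  linear_combination h

lemma repr_apply_L0_eq_zero_of_weight_eq_zero {x : V} {p : ZMod 2} (hx : x ∈ Vsub p)
    {i : Index} (hi : weight i = 0) (hiC : i ≠ iC) : bV.repr (φ x (bV (iL 0))) i = 0 :=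
  hA.repr_eq_zero_of_weight_eq_zero (fun j i hij => by
    have h := hA.weight_sub_mul_repr hφ hx j i
    rw [hij, sub_self, zero_mul, eq_comm, mul_eq_zero] at h
    exact h.resolve_left (superSign_ne_zero _)) hi hiC

lemma br_apply_L0_L0 (v : V) : br v (φ (bV (iL 0)) (bV (iL 0))) = 0 := by
  have hW0 : ∀ j i, weight i = 0 → i ≠ iC →
      bV.repr (br (bV j) (φ (bV (iL 0)) (bV (iL 0)))) i = 0 := fun j i hi hiC => by
    have h := hA.weight_sub_mul_repr hφ (hA.mem_basis (iL 0)) j i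
    rw [hφ.symm_of_even_left (hA.mem_basis (iL 0)) (hA.mem_basis j),
      hA.repr_apply_L0_eq_zero_of_weight_eq_zero hφ (hA.mem_basis j) hi hiC, mul_zero, eq_comm,
      mul_eq_zero] at h
    exact h.resolve_left (superSign_ne_zero _)
  rw [bV.eq_repr_smul_of_repr_eq_zero (v := φ (bV (iL 0)) (bV (iL 0))) (i₀ := iC)
    fun i hiC => ?_, map_smul, hA.br_C, smul_zero]
  by_cases hi : weight i = 0
  · exact hA.repr_apply_L0_eq_zero_of_weight_eq_zero hφ (hA.mem_basis (iL 0)) hi hiC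
  · exact hA.repr_eq_zero_of_weight_ne_zero hW0 hi

lemma br_apply_L0_H0 (v : V) : br v (φ (bV (iL 0)) (bV (iH 0))) = 0 := by
  rw [bV.eq_repr_smul_of_repr_eq_zero (v := φ (bV (iL 0)) (bV (iH 0))) (i₀ := iC)
    fun i hiC => ?_, map_smul, hA.br_C, smul_zero]
  by_cases hi : weight i = 0
  · rw [hφ.symm_of_even_left (hA.mem_basis (iL 0)) (hA.mem_basis (iH 0))]
    exact hA.repr_apply_L0_eq_zero_of_weight_eq_zero hφ (hA.mem_basis (iH 0)) hi hiC
  · have h := hA.weight_sub_mul_repr hφ (hA.mem_basis (iL 0)) (iH 0) i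
    rw [hA.br_apply_L0_L0 hφ, map_zero, Finsupp.zero_apply, mul_zero, mul_eq_zero] at h
    exact h.resolve_left (by simpa using hi)

lemma repr_apply_L0_basis_eq_zero_of_weight_ne {a i : Index} (h : weight i ≠ weight a) :
    bV.repr (φ (bV (iL 0)) (bV a)) i = 0 := by
  have h' := hA.weight_sub_mul_repr hφ (hA.mem_basis (iL 0)) a i
  rw [hA.br_apply_L0_L0 hφ, map_zero, Finsupp.zero_apply, mul_zero, mul_eq_zero] at h'
  exact h'.resolve_left (sub_ne_zero.mpr (by exact_mod_cast h))

lemma repr_apply_L0_basis_eq_zero_of_charge_ne {a i : Index} (h : charge i ≠ charge a) :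
    bV.repr (φ (bV (iL 0)) (bV a)) i = 0 := by
  have h' := hA.charge_sub_mul_repr hφ (hA.mem_basis (iL 0)) a i
  rw [hA.br_apply_L0_H0 hφ, map_zero, Finsupp.zero_apply, mul_zero, mul_eq_zero] at h'
  exact h'.resolve_left (sub_ne_zero.mpr (by exact_mod_cast h))

lemma apply_L0_basis_eq_zero_of_repr {a : Index}
    (h : ∀ i, weight i = weight a → charge i = charge a → bV.repr (φ (bV (iL 0)) (bV a)) i = 0) :
    φ (bV (iL 0)) (bV a) = 0 :=
  bV.ext_elem fun i => by
    rw [map_zero, Finsupp.zero_apply]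
    by_cases hw : weight i = weight a
    · by_cases hc : charge i = charge a
      · exact h i hw hc
      · exact hA.repr_apply_L0_basis_eq_zero_of_charge_ne hφ hc
    · exact hA.repr_apply_L0_basis_eq_zero_of_weight_ne hφ hw

lemma apply_L0_basis_eq_zero_of_odd (hd : d = 1) (a : Index) : φ (bV (iL 0)) (bV a) = 0 :=
  hA.apply_L0_basis_eq_zero_of_repr hφ fun i _ hc => by
    refine hA.repr_eq_zero_of_mem (hφ.mem _ _ _ (hA.mem_basis (iL 0)) _ (hA.mem_basis a)) ?_
    rw [parity_eq_of_charge_eq hc, hd, parity_inl, zero_add]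
    exact (succ_ne_self _).symm

section Even

variable (hd : d = 0)
include hd

/-- The part of `φ(a, j)` of weight `wt a + wt j` is computed from `φ(a, L₀)` and, by
symmetry, from `φ(j, L₀)`. -/
lemma weight_sub_mul_repr_br_comm {a : Index} (ha : parity a = 0) (j i : Index) :
    ((weight i : ℂ) - weight a) * bV.repr (br (bV j) (φ (bV (iL 0)) (bV a))) i =
      ((weight i : ℂ) - weight j) * bV.repr (br (bV a) (φ (bV (iL 0)) (bV j))) i := by
  have h1 := hA.weight_sub_mul_repr hφ (hA.mem_basis a) j i
  have h2 := hA.weight_sub_mul_repr hφ (hA.mem_basis j) a i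
  have hs := hφ.symm _ _ _ (hA.mem_basis a) _ (hA.mem_basis j)
  subst hd
  simp only [ha, zero_mul, mul_zero, add_zero, superSign_zero, one_smul, one_mul] at h1 h2 hs
  rw [hs] at h1
  rw [hφ.symm_of_even_left (hA.mem_basis (iL 0)) (hA.mem_basis a),
    hφ.symm_of_even_left (hA.mem_basis (iL 0)) (hA.mem_basis j)]
  linear_combination (-((weight i : ℂ) - weight a)) * h1 + ((weight i : ℂ) - weight j) * h2

lemma repr_apply_L0_L_iL_eq_zero (k : ℤ) :
    bV.repr (φ (bV (iL 0)) (bV (iL k))) (iL k) = 0 := by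
  have rel : ∀ k m : ℤ, (m : ℂ) * (m - k) * bV.repr (φ (bV (iL 0)) (bV (iL k))) (iL k) =
      k * (k - m) * bV.repr (φ (bV (iL 0)) (bV (iL m))) (iL m) := fun k m => by
    have h := hA.weight_sub_mul_repr_br_comm hφ hd (a := iL k) rfl (iL m) (iL (m + k))
    rw [hA.repr_br_L_iL, add_comm m k, hA.repr_br_L_iL] at h
    push_cast [weight_iL] at h
    linear_combination -h
  have h12 := rel 1 2
  have h13 := rel 1 3
  have h23 := rel 2 3
  push_cast at h12 h13 h23
  have h1 : bV.repr (φ (bV (iL 0)) (bV (iL 1))) (iL 1) = 0 := by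
    linear_combination (1 / 4 : ℂ) * h12 + (1 / 12 : ℂ) * h13 - (1 / 12 : ℂ) * h23
  rcases eq_or_ne k 1 with rfl | hk
  · exact h1
  · have hk1 := rel k 1
    rw [h1, mul_zero] at hk1
    refine (mul_eq_zero.mp hk1).resolve_left ?_
    push_cast
    exact mul_ne_zero one_ne_zero (sub_ne_zero.mpr (by exact_mod_cast hk.symm))

lemma mul_repr_apply_L0_L_iH (q k : ℤ) :
    (q : ℂ) * bV.repr (φ (bV (iL 0)) (bV (iL k))) (iH k) =
      k * (q - k / 2) * bV.repr (φ (bV (iL 0)) (bV (iP q))) (iP q) := by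
  have h := hA.weight_sub_mul_repr_br_comm hφ hd (a := iL k) rfl (iP q) (iP (q + k))
  rw [hA.repr_br_P_iP, hA.repr_br_L_iP, hA.repr_apply_L0_L_iL_eq_zero hφ hd] at h
  push_cast [weight_iL, weight_iP] at h
  linear_combination h

lemma repr_apply_L0_L_iH_eq_zero {k : ℤ} (hk : k ≠ 0) :
    bV.repr (φ (bV (iL 0)) (bV (iL k))) (iH k) = 0 := by
  have h2 : bV.repr (φ (bV (iL 0)) (bV (iL 2))) (iH 2) = 0 := by
    have := hA.mul_repr_apply_L0_L_iH hφ hd 1 2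
    push_cast at this
    linear_combination this
  have h := hA.weight_sub_mul_repr_br_comm hφ hd (a := iL k) rfl (iL 2) (iH (2 + k))
  rw [hA.repr_br_L_iH, add_comm 2 k, hA.repr_br_L_iH, h2] at h
  push_cast [weight_iL, weight_iH] at h
  have hk' : (k : ℂ) ≠ 0 := by exact_mod_cast hk
  have : (2 * k : ℂ) * bV.repr (φ (bV (iL 0)) (bV (iL k))) (iH k) = 0 := by
    linear_combination h
  exact (mul_eq_zero.mp this).resolve_left (mul_ne_zero two_ne_zero hk')

lemma repr_apply_L0_P_iP_eq_zero (q : ℤ) :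
    bV.repr (φ (bV (iL 0)) (bV (iP q))) (iP q) = 0 := by
  have h := hA.mul_repr_apply_L0_L_iH hφ hd q 1
  rw [hA.repr_apply_L0_L_iH_eq_zero hφ hd one_ne_zero] at h
  push_cast at h
  have : (1 / 2 - q : ℂ) * bV.repr (φ (bV (iL 0)) (bV (iP q))) (iP q) = 0 := by
    linear_combination h
  exact (mul_eq_zero.mp this).resolve_left (half_sub_intCast_ne_zero q)

lemma repr_apply_L0_M_iM_eq_zero (q : ℤ) :
    bV.repr (φ (bV (iL 0)) (bV (iM q))) (iM q) = 0 := by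
  have h := hA.weight_sub_mul_repr_br_comm hφ hd (a := iL 1) rfl (iM q) (iM (q + 1))
  rw [hA.repr_br_M_iM, hA.repr_br_L_iM, hA.repr_apply_L0_L_iL_eq_zero hφ hd,
    hA.repr_apply_L0_L_iH_eq_zero hφ hd one_ne_zero] at h
  push_cast [weight_iL, weight_iM] at h
  have : (1 / 2 - q : ℂ) * bV.repr (φ (bV (iL 0)) (bV (iM q))) (iM q) = 0 := by
    linear_combination h
  exact (mul_eq_zero.mp this).resolve_left (half_sub_intCast_ne_zero q)

lemma repr_apply_L0_H_iL_eq_zero {m : ℤ} (hm : m ≠ 0) :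
    bV.repr (φ (bV (iL 0)) (bV (iH m))) (iL m) = 0 := by
  have h := hA.weight_sub_mul_repr_br_comm hφ hd (a := iL (2 * m)) rfl (iH m) (iL (2 * m + m))
  rw [hA.repr_br_H_iL, hA.repr_br_L_iL] at h
  push_cast [weight_iL, weight_iH] at h
  have hm' : (m : ℂ) ≠ 0 := by exact_mod_cast hm
  have : (2 * m * m : ℂ) * bV.repr (φ (bV (iL 0)) (bV (iH m))) (iL m) = 0 := by
    linear_combination h
  exact (mul_eq_zero.mp this).resolve_left (by simp [hm'])

lemma repr_apply_L0_H_iH_eq_zero {m : ℤ} (hm : m ≠ 0) :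
    bV.repr (φ (bV (iL 0)) (bV (iH m))) (iH m) = 0 := by
  have h := hA.weight_sub_mul_repr_br_comm hφ hd (a := iL 1) rfl (iH m) (iH (m + 1))
  rw [hA.repr_br_H_iH, add_comm m 1, hA.repr_br_L_iH, hA.repr_apply_L0_L_iL_eq_zero hφ hd] at h
  push_cast [weight_iL, weight_iH] at h
  have hm' : (m : ℂ) ≠ 0 := by exact_mod_cast hm
  have : (m : ℂ) * bV.repr (φ (bV (iL 0)) (bV (iH m))) (iH m) = 0 := by
    linear_combination -h
  exact (mul_eq_zero.mp this).resolve_left hm'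

lemma apply_L0_P_eq_zero (q : ℤ) : φ (bV (iL 0)) (bV (iP q)) = 0 :=
  hA.apply_L0_basis_eq_zero_of_repr hφ fun i hw hc => by
    rcases i with ((n | n) | ⟨⟩) | (n | n) <;>
      simp only [weight, charge, neg_inj, zero_eq_neg, zero_ne_one, Int.reduceNeg,
        reduceCtorEq] at hw hc
    obtain rfl : n = q := by omega
    exact hA.repr_apply_L0_P_iP_eq_zero hφ hd n

lemma apply_L0_M_eq_zero (q : ℤ) : φ (bV (iL 0)) (bV (iM q)) = 0 :=
  hA.apply_L0_basis_eq_zero_of_repr hφ fun i hw hc => by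
    rcases i with ((n | n) | ⟨⟩) | (n | n) <;>
      simp only [weight, charge, neg_inj, zero_eq_neg, one_ne_zero, Int.reduceNeg,
        reduceCtorEq] at hw hc
    obtain rfl : n = q := by omega
    exact hA.repr_apply_L0_M_iM_eq_zero hφ hd n

lemma two_smul_apply_L0_L0_add (q : ℤ) :
    (2 : ℂ) • φ (bV (iL 0)) (bV (iL 0)) + (2 * q : ℂ) • φ (bV (iL 0)) (bV (iH 0)) = 0 := by
  have h := hφ.map_br_right 0 1 1 _ (hA.mem_basis (iL 0)) _ (hA.mem_basis (iP q)) _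
    (hA.mem_basis (iM (-q)))
  rw [hA.apply_L0_P_eq_zero hφ hd, hA.apply_L0_M_eq_zero hφ hd, map_zero, map_zero, smul_zero,
    smul_zero, sub_zero, hA.br_P_M, add_neg_cancel, map_add, map_add, map_smul, map_smul,
    map_smul, hA.apply_C_eq_zero hφ, smul_zero, add_zero] at h
  rw [← h]
  push_cast
  ring_nf

lemma apply_L0_L_eq_zero (k : ℤ) : φ (bV (iL 0)) (bV (iL k)) = 0 := by
  rcases eq_or_ne k 0 with rfl | hk
  · simpa using hA.two_smul_apply_L0_L0_add hφ hd 0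
  refine hA.apply_L0_basis_eq_zero_of_repr hφ fun i hw hc => ?_
  rcases i with ((n | n) | ⟨⟩) | (n | n) <;>
    simp only [weight, charge, neg_inj, zero_eq_neg, one_ne_zero, Int.reduceNeg,
      reduceCtorEq] at hw hc
  · obtain rfl : n = k := by omega
    exact hA.repr_apply_L0_L_iL_eq_zero hφ hd n
  · obtain rfl : n = k := by omega
    exact hA.repr_apply_L0_L_iH_eq_zero hφ hd hk
  · exact absurd (by omega) hk

lemma apply_L0_H_eq_zero (m : ℤ) : φ (bV (iL 0)) (bV (iH m)) = 0 := by
  rcases eq_or_ne m 0 with rfl | hm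
  · have h := hA.two_smul_apply_L0_L0_add hφ hd 1
    rw [hA.apply_L0_L_eq_zero hφ hd 0] at h
    simpa using h
  refine hA.apply_L0_basis_eq_zero_of_repr hφ fun i hw hc => ?_
  rcases i with ((n | n) | ⟨⟩) | (n | n) <;>
    simp only [weight, charge, neg_inj, zero_eq_neg, one_ne_zero, Int.reduceNeg,
      reduceCtorEq] at hw hc
  · obtain rfl : n = m := by omega
    exact hA.repr_apply_L0_H_iL_eq_zero hφ hd hm
  · obtain rfl : n = m := by omega
    exact hA.repr_apply_L0_H_iH_eq_zero hφ hd hm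
  · exact absurd (by omega) hm

lemma apply_L0_basis_eq_zero_of_even (a : Index) : φ (bV (iL 0)) (bV a) = 0 := by
  rcases a with ((k | k) | ⟨⟩) | (q | q)
  · exact hA.apply_L0_L_eq_zero hφ hd k
  · exact hA.apply_L0_H_eq_zero hφ hd k
  · exact hA.apply_C_eq_zero hφ _
  · exact hA.apply_L0_P_eq_zero hφ hd q
  · exact hA.apply_L0_M_eq_zero hφ hd q

end Even

lemma apply_L0_basis_eq_zero (a : Index) : φ (bV (iL 0)) (bV a) = 0 := by
  rcases ZMod.eq_zero_or_one d with hd | hd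
  · exact hA.apply_L0_basis_eq_zero_of_even hφ hd a
  · exact hA.apply_L0_basis_eq_zero_of_odd hφ hd a

lemma repr_apply_basis_eq_zero_of_weight_ne {a j i : Index} (h : weight i ≠ weight j) :
    bV.repr (φ (bV a) (bV j)) i = 0 := by
  have h' := hA.weight_sub_mul_repr hφ (hA.mem_basis a) j i
  rw [← hφ.symm_of_even_left (hA.mem_basis (iL 0)) (hA.mem_basis a),
    hA.apply_L0_basis_eq_zero hφ] at h'
  simp only [map_zero, Finsupp.zero_apply, mul_zero, mul_eq_zero] at h'
  exact h'.resolve_left (sub_ne_zero.mpr (by exact_mod_cast h))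

lemma apply_basis_eq_zero_of_weight_ne {a j : Index} (h : weight a ≠ weight j) :
    φ (bV a) (bV j) = 0 :=
  bV.ext_elem fun i => by
    rw [map_zero, Finsupp.zero_apply]
    by_cases hij : weight i = weight j
    · rw [hφ.symm _ _ _ (hA.mem_basis a) _ (hA.mem_basis j), map_smul, Finsupp.smul_apply,
        hA.repr_apply_basis_eq_zero_of_weight_ne hφ (hij ▸ h.symm), smul_zero]
    · exact hA.repr_apply_basis_eq_zero_of_weight_ne hφ hij

lemma apply_basis_eq_zero (a j : Index) : φ (bV a) (bV j) = 0 := by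
  by_cases h : weight a = weight j
  · refine hA.map_basis_eq_zero_of_map_br (φ (bV a)) (hA.apply_C_eq_zero hφ _) j
      fun y z hy hz => ?_
    rw [hφ.map_br_right _ _ _ _ (hA.mem_basis a) _ (hA.mem_basis y) _ (hA.mem_basis z),
      hA.apply_basis_eq_zero_of_weight_ne hφ (h ▸ hz.symm),
      hA.apply_basis_eq_zero_of_weight_ne hφ (h ▸ hy.symm)]
    simp only [map_zero, smul_zero, sub_zero]
  · exact hA.apply_basis_eq_zero_of_weight_ne hφ h

theorem eq_zero : φ = 0 :=
  bV.ext fun a => bV.ext fun j => by simpa using hA.apply_basis_eq_zero hφ a j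

end Biderivation

end IsN2Ramond

end N2Ramond

theorem symmetric_superbiderivation_N2Ramond_trivial
    (V : Type) [AddCommGroup V] [Module ℂ V]
    (bV : Module.Basis (((ℤ ⊕ ℤ) ⊕ Unit) ⊕ (ℤ ⊕ ℤ)) ℂ V)
    (br : V →ₗ[ℂ] V →ₗ[ℂ] V)
    (L : ℤ → V) (H : ℤ → V) (Cc : V) (Gp : ℤ → V) (Gm : ℤ → V)
    (hLdef : ∀ m : ℤ, L m = bV (Sum.inl (Sum.inl (Sum.inl m))))
    (hHdef : ∀ m : ℤ, H m = bV (Sum.inl (Sum.inl (Sum.inr m))))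
    (hCdef : Cc = bV (Sum.inl (Sum.inr ())))
    (hGpdef : ∀ p : ℤ, Gp p = bV (Sum.inr (Sum.inl p)))
    (hGmdef : ∀ p : ℤ, Gm p = bV (Sum.inr (Sum.inr p)))
    (Vsub : ZMod 2 → Submodule ℂ V)
    (hV0 : Vsub 0 = Submodule.span ℂ (Set.range (fun i : (ℤ ⊕ ℤ) ⊕ Unit => bV (Sum.inl i))))
    (hV1 : Vsub 1 = Submodule.span ℂ (Set.range (fun j : ℤ ⊕ ℤ => bV (Sum.inr j))))
    (sgn : ZMod 2 → ℂ) (hsgn : ∀ p : ZMod 2, sgn p = if p = 1 then -1 else 1)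
    (hLL : ∀ m n : ℤ, br (L m) (L n) = ((m : ℂ) - n) • L (m + n) +
      (if m + n = 0 then ((m : ℂ) ^ 3 - m) / 12 else 0) • Cc)
    (hHH : ∀ m n : ℤ, br (H m) (H n) = (if m + n = 0 then (m : ℂ) / 3 else 0) • Cc)
    (hLH : ∀ m n : ℤ, br (L m) (H n) = (-(n : ℂ)) • H (m + n))
    (hLGp : ∀ m p : ℤ, br (L m) (Gp p) = ((m : ℂ) / 2 - p) • Gp (p + m))
    (hLGm : ∀ m p : ℤ, br (L m) (Gm p) = ((m : ℂ) / 2 - p) • Gm (p + m))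
    (hHGp : ∀ m p : ℤ, br (H m) (Gp p) = Gp (m + p))
    (hHGm : ∀ m p : ℤ, br (H m) (Gm p) = -Gm (m + p))
    (hGpGm : ∀ p q : ℤ, br (Gp p) (Gm q) = (2 : ℂ) • L (p + q) + ((p : ℂ) - q) • H (p + q) +
      (if p + q = 0 then ((p : ℂ) ^ 2 - 1 / 4) / 3 else 0) • Cc)
    (hGpGp : ∀ p q : ℤ, br (Gp p) (Gp q) = 0)
    (hGmGm : ∀ p q : ℤ, br (Gm p) (Gm q) = 0)
    (hxC : ∀ x : V, br x Cc = 0)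
    (hskew : ∀ p q : ZMod 2, ∀ x ∈ Vsub p, ∀ y ∈ Vsub q,
      br x y = (-(sgn (p * q))) • br y x)
    (φ : V →ₗ[ℂ] V →ₗ[ℂ] V) (d : ZMod 2)
    (hhom : ∀ p q : ZMod 2, ∀ x ∈ Vsub p, ∀ y ∈ Vsub q, φ x y ∈ Vsub (p + q + d))
    (hbd1 : ∀ p q t : ZMod 2, ∀ x ∈ Vsub p, ∀ y ∈ Vsub q, ∀ z ∈ Vsub t,
      φ (br x y) z = sgn (d * p) • br x (φ y z) - sgn (q * (d + p)) • br y (φ x z))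
    (hbd2 : ∀ p q t : ZMod 2, ∀ x ∈ Vsub p, ∀ y ∈ Vsub q, ∀ z ∈ Vsub t,
      φ x (br y z) = sgn ((d + p) * q) • br y (φ x z) - sgn (t * (d + p + q)) • br z (φ x y))
    (hsym : ∀ p q : ZMod 2, ∀ x ∈ Vsub p, ∀ y ∈ Vsub q, φ x y = sgn (p * q) • φ y x) :
    ∀ x y : V, φ x y = 0 := by
  obtain rfl : L = fun m => bV (.inl (.inl (.inl m))) := funext hLdef
  obtain rfl : H = fun m => bV (.inl (.inl (.inr m))) := funext hHdef
  obtain rfl : Gp = fun p => bV (.inr (.inl p)) := funext hGpdef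
  obtain rfl : Gm = fun p => bV (.inr (.inr p)) := funext hGmdef
  obtain rfl : sgn = superSign := funext hsgn
  subst hCdef
  have hA : N2Ramond.IsN2Ramond bV br Vsub :=
    ⟨hV0, hV1, hLL, hHH, hLH, hLGp, hLGm, hHGp, hHGm, hGpGm, hGpGp, hGmGm, hxC, hskew⟩
  intro x y
  rw [hA.eq_zero ⟨hhom, hbd1, hbd2, hsym⟩, LinearMap.zero_apply, LinearMap.zero_apply]
end

section
/- Let (L, [·,·]) be a complex Lie algebra and let ∘ be a commutative post-Lie algebra structure on L, i.e. a bilinear product satisfying x ∘ y = y ∘ x, [x, y] ∘ z = x ∘ (y ∘ z) − y ∘ (x ∘ z), and x ∘ [y, z] = [x ∘ y, z] + [y, x ∘ z] for all x, y, z ∈ L. Then the bilinear map f : L × L → L defined by f(x, y) = x ∘ y is a symmetric biderivation of L, i.e. f([x,y], z) = [x, f(y,z)] − [y, f(x,z)], f(x, [y,z]) = [y, f(x,z)] − [z, f(x,y)], and f(x,y) = f(y,x) for all x, y, z ∈ L. -/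
section Biderivation

variable {L : Type*} [LieRing L] {f : L → L → L}

theorem biderivation_right_of_leibniz
    (hleib : ∀ x y z : L, f x ⁅y, z⁆ = ⁅f x y, z⁆ + ⁅y, f x z⁆) (x y z : L) :
    f x ⁅y, z⁆ = ⁅y, f x z⁆ - ⁅z, f x y⁆ := by
  rw [hleib, ← lie_skew (f x y) z]
  abel

theorem biderivation_left_of_leibniz_of_symm (hsymm : ∀ x y : L, f x y = f y x)
    (hleib : ∀ x y z : L, f x ⁅y, z⁆ = ⁅f x y, z⁆ + ⁅y, f x z⁆) (x y z : L) :
    f ⁅x, y⁆ z = ⁅x, f y z⁆ - ⁅y, f x z⁆ := by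
  rw [hsymm, biderivation_right_of_leibniz hleib, hsymm z x, hsymm z y]

end Biderivation

theorem postLie_gives_symmetric_biderivation_general
    (L : Type) [LieRing L] [LieAlgebra ℂ L]
    (mul : L →ₗ[ℂ] L →ₗ[ℂ] L)
    (hcomm : ∀ x y : L, mul x y = mul y x)
    (hpost2 : ∀ x y z : L, mul x ⁅y, z⁆ = ⁅mul x y, z⁆ + ⁅y, mul x z⁆) :
    (∀ x y z : L, mul ⁅x, y⁆ z = ⁅x, mul y z⁆ - ⁅y, mul x z⁆) ∧
    (∀ x y z : L, mul x ⁅y, z⁆ = ⁅y, mul x z⁆ - ⁅z, mul x y⁆) ∧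
    (∀ x y : L, mul x y = mul y x) :=
  ⟨biderivation_left_of_leibniz_of_symm hcomm hpost2,
    biderivation_right_of_leibniz hpost2, hcomm⟩

theorem postLie_gives_symmetric_biderivation
    (L : Type) [LieRing L] [LieAlgebra ℂ L]
    (mul : L →ₗ[ℂ] L →ₗ[ℂ] L)
    (hcomm : ∀ x y : L, mul x y = mul y x)
    (hpost1 : ∀ x y z : L, mul ⁅x, y⁆ z = mul x (mul y z) - mul y (mul x z))
    (hpost2 : ∀ x y z : L, mul x ⁅y, z⁆ = ⁅mul x y, z⁆ + ⁅y, mul x z⁆) :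
    (∀ x y z : L, mul ⁅x, y⁆ z = ⁅x, mul y z⁆ - ⁅y, mul x z⁆) ∧
    (∀ x y z : L, mul x ⁅y, z⁆ = ⁅y, mul x z⁆ - ⁅z, mul x y⁆) ∧
    (∀ x y : L, mul x y = mul y x) :=
  postLie_gives_symmetric_biderivation_general L mul hcomm hpost2
end

section
/- Every commutative post-Lie superalgebra structure ∘ on the N=1 super-BMS₃ algebra ℬ is trivial, i.e. x ∘ y = 0 for all x, y ∈ ℬ. -/
/-!
For homogeneous `x`, the map `x ∘ -` is a superderivation of `ℬ`, and supercommutativity lets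
one read `x ∘ y` as a derivation applied to `y` or to `x`. Taking `L`-, `W`- and `Q`-coordinates
of the derivation identities with `L_0`, `L_1` gives: `x ∘ C_i` is central, so `C_i ∘ -` vanishes
on `[ℬ, ℬ] = ℬ`; the coordinates of `L_a ∘ L_b` satisfy a Witt-type recursion in `(a, b)` which,
being symmetric, forces `L_a ∘ L_b` to be central; then every `x ∘ -` is diagonal on the
generators modulo the centre, and comparing `x ∘ y` with `y ∘ x` kills the diagonal entries.
Hence `ℬ ∘ ℬ` is central, so `[x, y] ∘ z = x ∘ (y ∘ z) ∓ y ∘ (x ∘ z) = 0`, and perfectness of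
`ℬ` gives `∘ = 0`.
-/

namespace SuperBMS3

theorem eq_zero_of_intCast_mul_eq_zero {c : ℤ} (hc : c ≠ 0) {z : ℂ} (h : (c : ℂ) * z = 0) :
    z = 0 :=
  (mul_eq_zero.mp h).resolve_left (Int.cast_ne_zero.mpr hc)

theorem intCast_add_half_ne_zero (k : ℤ) : (k : ℂ) + 1 / 2 ≠ 0 := fun h => by
  have : ((2 * k + 1 : ℤ) : ℂ) = 0 := by push_cast; linear_combination 2 * h
  exact absurd (Int.cast_eq_zero.mp this) (by omega)

theorem eq_intCast_mul_of_add_of_ne {d : ℤ → ℂ} (h : ∀ m n, m ≠ n → d (m + n) = d m + d n)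
    (m : ℤ) : d m = m * d 1 := by
  have h' : ∀ m n : ℤ, m ≠ n → ∀ k, m + n = k → d k = d m + d n := fun m n hmn k hk =>
    hk ▸ h m n hmn
  have h0 : d 0 = 0 := by linear_combination -h' 0 1 (by norm_num) 1 (by norm_num)
  have h2 : d 2 = 2 * d 1 := by
    linear_combination h' 1 4 (by norm_num) 5 (by norm_num) - h' 2 3 (by norm_num) 5 (by norm_num)
      + h' 1 3 (by norm_num) 4 (by norm_num)
  have hm1 : d (-1) = -d 1 := by linear_combination h0 - h' 1 (-1) (by norm_num) 0 (by norm_num)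
  have hm2 : d (-2) = -2 * d 1 := by
    linear_combination h0 - h2 - h' 2 (-2) (by norm_num) 0 (by norm_num)
  induction m using Int.induction_on with
  | zero => simp [h0]
  | succ i ih =>
    rcases eq_or_ne i 1 with rfl | hi
    · push_cast; linear_combination h2
    · rw [h i 1 (by exact_mod_cast hi), ih]; push_cast; ring
  | pred i ih =>
    rcases eq_or_ne i 1 with rfl | hi
    · push_cast; linear_combination hm2
    · rw [sub_eq_add_neg, h (-i) (-1) (by omega), ih, hm1]
      push_cast; ring

theorem diag_eq_mul_of_witt_rec {F : ℤ → ℤ → ℂ}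
    (hF : ∀ m n j : ℤ, ((m : ℂ) - n) * F (m + n) j =
      (j - 2 * n) * F m (j - n) + (2 * m - j) * F n (j - m)) (m : ℤ) :
    F m m = m * F 1 1 := by
  refine eq_intCast_mul_of_add_of_ne (d := fun m => F m m) (fun m n hmn => ?_) m
  have hne : (m : ℂ) - n ≠ 0 := sub_ne_zero.mpr (Int.cast_injective.ne hmn)
  refine mul_left_cancel₀ hne ?_
  have := hF m n (m + n)
  simp only [add_sub_cancel_right, add_sub_cancel_left] at this
  push_cast at this ⊢
  linear_combination this

theorem column_eq_zero_of_symm_of_shift {X : ℤ → ℤ → ℤ → ℂ}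
    (hX : ∀ a b j : ℤ, ((j : ℂ) - b) * X a b j = (j - 2 * b) * X a 0 (j - b))
    (hsym : ∀ a b j, X a b j = X b a j) (hdiag : ∀ a b, X a b b = b * X a 1 1) (a j : ℤ) :
    X a 0 j = 0 := by
  have h00 : ∀ s, X 0 0 s = 0 := fun s => by
    rcases eq_or_ne s 0 with rfl | hs
    · simpa using hdiag 0 0
    · have t := hX 0 (-s) 0
      rw [hsym 0 (-s) 0, show X (-s) 0 0 = 0 by simpa using hdiag (-s) 0,
        show (0 : ℤ) - -s = s by ring] at t
      exact eq_zero_of_intCast_mul_eq_zero (c := 2 * s) (by omega)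
        (by push_cast at t ⊢; linear_combination -t)
  have hoff : ∀ a j, j ≠ a → X a 0 j = 0 := fun a j hj => by
    have t := hX 0 a j
    rw [h00, mul_zero, hsym] at t
    exact eq_zero_of_intCast_mul_eq_zero (c := j - a) (by omega)
      (by push_cast at t ⊢; linear_combination t)
  have hg : X 0 1 1 = 0 := by
    have t1 := hX 1 2 3
    have t2 := hX 2 1 3
    have d2 : X 2 0 2 = 2 * X 0 1 1 := by rw [hsym 2 0 2, hdiag 0 2]; norm_num
    norm_num at t1 t2
    rw [hsym 1 0 1, hsym 1 2 3] at t1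
    exact eq_zero_of_intCast_mul_eq_zero (c := 4) (by omega)
      (by push_cast; linear_combination 2 * t1 - t2 - d2)
  rcases eq_or_ne j a with rfl | hj
  · rw [hsym, hdiag, hg, mul_zero]
  · exact hoff a j hj

theorem eq_zero_of_symm_of_shift {X : ℤ → ℤ → ℤ → ℂ}
    (hX : ∀ a b j : ℤ, ((j : ℂ) - b) * X a b j = (j - 2 * b) * X a 0 (j - b))
    (hsym : ∀ a b j, X a b j = X b a j) (hdiag : ∀ a b, X a b b = b * X a 1 1) (a b j : ℤ) :
    X a b j = 0 := by
  have hcol := column_eq_zero_of_symm_of_shift hX hsym hdiag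
  have hoff : ∀ a b j, j ≠ b → X a b j = 0 := fun a b j hj => by
    have t := hX a b j
    rw [hcol, mul_zero] at t
    exact eq_zero_of_intCast_mul_eq_zero (c := j - b) (by omega)
      (by push_cast at t ⊢; linear_combination t)
  have hg : ∀ a, X a 1 1 = 0 := fun a => by
    rcases eq_or_ne a 1 with rfl | ha
    · have t := hdiag 1 2
      rw [hsym, hoff 2 1 2 (by norm_num)] at t
      exact eq_zero_of_intCast_mul_eq_zero (c := 2) (by omega)
        (by push_cast; linear_combination -t)
    · rw [hsym]; exact hoff 1 a 1 (Ne.symm ha)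
  rcases eq_or_ne j b with rfl | hj
  · rw [hdiag, hg, mul_zero]
  · exact hoff a b j hj

theorem eq_zero_of_symm_of_half_shift {X : ℤ → ℤ → ℤ → ℂ}
    (hX : ∀ a b j : ℤ, ((j : ℂ) + 1 / 2 - b) * X a b j = (j + 1 / 2 - 3 * b / 2) * X a 0 (j - b))
    (hsym : ∀ a b j, X a b j = X b a j) (a b j : ℤ) :
    X a b j = 0 := by
  have half_ne : ∀ j b : ℤ, (j : ℂ) + 1 / 2 - b ≠ 0 := fun j b => by
    simpa [add_sub_right_comm] using intCast_add_half_ne_zero (j - b)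
  have hcol : ∀ b j : ℤ, ((j : ℂ) + 1 / 2 - b) * X b 0 j =
      (j + 1 / 2 - 3 * b / 2) * X 0 0 (j - b) := fun b j => by
    rw [← hsym, hX]
  -- `hX 2 1` and `hX 1 2` at `s + 3` share the unknown `X 2 1 (s + 3)`; eliminating it and
  -- substituting `hcol` leaves `3 / 2 * X 0 0 s = 0`.
  have h00 : ∀ s, X 0 0 s = 0 := fun s => by
    have t1 := hX 2 1 (s + 3)
    have t2 := hX 1 2 (s + 3)
    have q2 := hcol 2 (s + 2)
    have q1 := hcol 1 (s + 1)
    rw [hsym 1 2] at t2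
    simp only [show s + 3 - 1 = s + 2 by ring, show s + 3 - 2 = s + 1 by ring,
      show s + 2 - 2 = s by ring, show s + 1 - 1 = s by ring] at t1 t2 q1 q2
    exact eq_zero_of_intCast_mul_eq_zero (c := 3) (by omega) (by
      push_cast at t1 t2 q1 q2 ⊢
      linear_combination 2 * ((s + 1 / 2) * ((s + 3 / 2) * t1 - (s + 5 / 2) * t2)
        + (s + 3 / 2) * (s + 2) * q2 - (s + 5 / 2) * (s + 1 / 2) * q1))
  have hzero : ∀ a j, X a 0 j = 0 := fun a j => by
    have t := hcol a j
    rw [h00, mul_zero] at t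
    exact (mul_eq_zero.mp t).resolve_left (half_ne j a)
  have t := hX a b j
  rw [hzero, mul_zero] at t
  exact (mul_eq_zero.mp t).resolve_left (half_ne j b)

end SuperBMS3

abbrev SuperBMS3.Index := ((ℤ ⊕ ℤ) ⊕ (Unit ⊕ Unit)) ⊕ ℤ

structure SuperBMS3 (V : Type) [AddCommGroup V] [Module ℂ V] where
  bV : Module.Basis SuperBMS3.Index ℂ V
  br : V →ₗ[ℂ] V →ₗ[ℂ] V
  L : ℤ → V
  W : ℤ → V
  C1 : V
  C2 : V
  /-- `Q k` is the odd generator `Q_{k + 1/2}`. -/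
  Q : ℤ → V
  L_eq : ∀ m, L m = bV (.inl (.inl (.inl m)))
  W_eq : ∀ m, W m = bV (.inl (.inl (.inr m)))
  C1_eq : C1 = bV (.inl (.inr (.inl ())))
  C2_eq : C2 = bV (.inl (.inr (.inr ())))
  Q_eq : ∀ k, Q k = bV (.inr k)
  grade : ZMod 2 → Submodule ℂ V
  grade_zero : grade 0 = Submodule.span ℂ (Set.range fun i => bV (.inl i))
  grade_one : grade 1 = Submodule.span ℂ (Set.range fun k => bV (.inr k))
  sgn : ZMod 2 → ℂ
  sgn_eq : ∀ p, sgn p = if p = 1 then -1 else 1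
  br_L_L : ∀ m n : ℤ, br (L m) (L n) = ((m : ℂ) - n) • L (m + n) +
    (if m + n = 0 then ((m : ℂ) ^ 3 - m) / 12 else 0) • C1
  br_L_W : ∀ m n : ℤ, br (L m) (W n) = ((m : ℂ) - n) • W (m + n) +
    (if m + n = 0 then ((m : ℂ) ^ 3 - m) / 12 else 0) • C2
  br_Q_Q : ∀ k l : ℤ, br (Q k) (Q l) = (2 : ℂ) • W (k + l + 1) +
    (if k + l + 1 = 0 then (((k : ℂ) + 1 / 2) ^ 2 - 1 / 4) / 3 else 0) • C2
  br_L_Q : ∀ m k : ℤ, br (L m) (Q k) = ((m : ℂ) / 2 - ((k : ℂ) + 1 / 2)) • Q (m + k)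
  br_W_W : ∀ m n : ℤ, br (W m) (W n) = 0
  br_W_Q : ∀ m k : ℤ, br (W m) (Q k) = 0
  br_C1_left : ∀ x, br C1 x = 0
  br_C2_left : ∀ x, br C2 x = 0
  br_supercomm : ∀ p q : ZMod 2, ∀ x ∈ grade p, ∀ y ∈ grade q, br x y = (-(sgn (p * q))) • br y x

namespace SuperBMS3

variable {V : Type} [AddCommGroup V] [Module ℂ V] (B : SuperBMS3 V)

noncomputable def coordL (j : ℤ) : V →ₗ[ℂ] ℂ := B.bV.coord (.inl (.inl (.inl j)))
noncomputable def coordW (j : ℤ) : V →ₗ[ℂ] ℂ := B.bV.coord (.inl (.inl (.inr j)))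
noncomputable def coordQ (j : ℤ) : V →ₗ[ℂ] ℂ := B.bV.coord (.inr j)

theorem ext_generators {M : Type} [AddCommGroup M] [Module ℂ M] {f g : V →ₗ[ℂ] M}
    (hL : ∀ m, f (B.L m) = g (B.L m)) (hW : ∀ m, f (B.W m) = g (B.W m))
    (hC1 : f B.C1 = g B.C1) (hC2 : f B.C2 = g B.C2) (hQ : ∀ k, f (B.Q k) = g (B.Q k)) :
    f = g := by
  refine B.bV.ext fun i => ?_
  rcases i with ((m | m) | (_ | _)) | k
  · rw [← B.L_eq]; exact hL m
  · rw [← B.W_eq]; exact hW m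
  · rw [← B.C1_eq]; exact hC1
  · rw [← B.C2_eq]; exact hC2
  · rw [← B.Q_eq]; exact hQ k

section coordinates

variable (j m : ℤ)

@[simp] theorem coordL_L : B.coordL j (B.L m) = if m = j then 1 else 0 := by
  simp [coordL, B.L_eq, Finsupp.single_apply]
@[simp] theorem coordL_W : B.coordL j (B.W m) = 0 := by simp [coordL, B.W_eq]
@[simp] theorem coordL_C1 : B.coordL j B.C1 = 0 := by simp [coordL, B.C1_eq]
@[simp] theorem coordL_C2 : B.coordL j B.C2 = 0 := by simp [coordL, B.C2_eq]
@[simp] theorem coordL_Q : B.coordL j (B.Q m) = 0 := by simp [coordL, B.Q_eq]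
@[simp] theorem coordW_L : B.coordW j (B.L m) = 0 := by simp [coordW, B.L_eq]
@[simp] theorem coordW_W : B.coordW j (B.W m) = if m = j then 1 else 0 := by
  simp [coordW, B.W_eq, Finsupp.single_apply]
@[simp] theorem coordW_C1 : B.coordW j B.C1 = 0 := by simp [coordW, B.C1_eq]
@[simp] theorem coordW_C2 : B.coordW j B.C2 = 0 := by simp [coordW, B.C2_eq]
@[simp] theorem coordW_Q : B.coordW j (B.Q m) = 0 := by simp [coordW, B.Q_eq]
@[simp] theorem coordQ_L : B.coordQ j (B.L m) = 0 := by simp [coordQ, B.L_eq]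
@[simp] theorem coordQ_W : B.coordQ j (B.W m) = 0 := by simp [coordQ, B.W_eq]
@[simp] theorem coordQ_C1 : B.coordQ j B.C1 = 0 := by simp [coordQ, B.C1_eq]
@[simp] theorem coordQ_C2 : B.coordQ j B.C2 = 0 := by simp [coordQ, B.C2_eq]
@[simp] theorem coordQ_Q : B.coordQ j (B.Q m) = if m = j then 1 else 0 := by
  simp [coordQ, B.Q_eq, Finsupp.single_apply]

end coordinates

theorem L_mem (m : ℤ) : B.L m ∈ B.grade 0 := by
  rw [B.grade_zero, B.L_eq]; exact Submodule.subset_span ⟨_, rfl⟩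
theorem W_mem (m : ℤ) : B.W m ∈ B.grade 0 := by
  rw [B.grade_zero, B.W_eq]; exact Submodule.subset_span ⟨_, rfl⟩
theorem C1_mem : B.C1 ∈ B.grade 0 := by
  rw [B.grade_zero, B.C1_eq]; exact Submodule.subset_span ⟨_, rfl⟩
theorem C2_mem : B.C2 ∈ B.grade 0 := by
  rw [B.grade_zero, B.C2_eq]; exact Submodule.subset_span ⟨_, rfl⟩
theorem Q_mem (k : ℤ) : B.Q k ∈ B.grade 1 := by
  rw [B.grade_one, B.Q_eq]; exact Submodule.subset_span ⟨_, rfl⟩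

theorem sgn_zero : B.sgn 0 = 1 := by simp [B.sgn_eq]
theorem sgn_one : B.sgn 1 = -1 := by simp [B.sgn_eq]

theorem ext_homogeneous {M : Type} [AddCommGroup M] [Module ℂ M] {f g : V →ₗ[ℂ] M}
    (h : ∀ p, ∀ x ∈ B.grade p, f x = g x) : f = g :=
  B.ext_generators (fun m => h 0 _ (B.L_mem m)) (fun m => h 0 _ (B.W_mem m)) (h 0 _ B.C1_mem)
    (h 0 _ B.C2_mem) (fun k => h 1 _ (B.Q_mem k))

theorem map_mem_of_generators {M : Type} [AddCommGroup M] [Module ℂ M] {N : Submodule ℂ M}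
    (f : V →ₗ[ℂ] M) (hL : ∀ m, f (B.L m) ∈ N) (hW : ∀ m, f (B.W m) ∈ N) (hC1 : f B.C1 ∈ N)
    (hC2 : f B.C2 ∈ N) (hQ : ∀ k, f (B.Q k) ∈ N) (v : V) : f v ∈ N := by
  have h : N.mkQ ∘ₗ f = 0 := B.ext_generators (by simpa using hL) (by simpa using hW)
    (by simpa using hC1) (by simpa using hC2) (by simpa using hQ)
  simpa using LinearMap.congr_fun h v

theorem br_comm_of_even {y : V} (hy : y ∈ B.grade 0) (v : V) : B.br v y = -B.br y v := by
  suffices h : B.br.flip y = -B.br y from LinearMap.congr_fun h v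
  refine B.ext_homogeneous fun p x hx => ?_
  simp [B.br_supercomm p 0 x hx y hy, B.sgn_zero]

theorem br_C1_right (v : V) : B.br v B.C1 = 0 := by
  rw [B.br_comm_of_even B.C1_mem, B.br_C1_left, neg_zero]
theorem br_C2_right (v : V) : B.br v B.C2 = 0 := by
  rw [B.br_comm_of_even B.C2_mem, B.br_C2_left, neg_zero]

theorem br_Q_L (k n : ℤ) : B.br (B.Q k) (B.L n) = ((k : ℂ) + 1 / 2 - n / 2) • B.Q (n + k) := by
  rw [B.br_comm_of_even (B.L_mem n), B.br_L_Q, ← neg_smul]; congr 1; ring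
theorem br_Q_W (k n : ℤ) : B.br (B.Q k) (B.W n) = 0 := by
  rw [B.br_comm_of_even (B.W_mem n), B.br_W_Q, neg_zero]

theorem br_L_L_zero (m : ℤ) : B.br (B.L m) (B.L 0) = (m : ℂ) • B.L m := by
  rw [B.br_L_L, add_zero]
  split_ifs with h <;> simp [h]
theorem br_L_W_zero (m : ℤ) : B.br (B.L m) (B.W 0) = (m : ℂ) • B.W m := by
  rw [B.br_L_W, add_zero]
  split_ifs with h <;> simp [h]
theorem br_L_zero_L (n : ℤ) : B.br (B.L 0) (B.L n) = -(n : ℂ) • B.L n := by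
  rw [B.br_comm_of_even (B.L_mem n), br_L_L_zero, neg_smul]
theorem br_L_zero_W (m : ℤ) : B.br (B.L 0) (B.W m) = -(m : ℂ) • B.W m := by
  rw [B.br_L_W]; simp
theorem br_L_zero_Q (k : ℤ) : B.br (B.L 0) (B.Q k) = -((k : ℂ) + 1 / 2) • B.Q k := by
  rw [B.br_L_Q]; simp
theorem br_W_L_zero (m : ℤ) : B.br (B.W m) (B.L 0) = (m : ℂ) • B.W m := by
  rw [B.br_comm_of_even (B.L_mem 0), br_L_zero_W, neg_smul, neg_neg]
theorem br_W_L (m n : ℤ) : B.br (B.W m) (B.L n) = -B.br (B.L n) (B.W m) :=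
  B.br_comm_of_even (B.L_mem n) _

section coordinates_of_brackets

variable (j : ℤ) (v : V)

theorem coordL_L_br (m : ℤ) : B.coordL j (B.br (B.L m) v) = (2 * m - j) * B.coordL (j - m) v := by
  suffices h : B.coordL j ∘ₗ B.br (B.L m) = ((2 * m - j : ℂ)) • B.coordL (j - m) from
    LinearMap.congr_fun h v
  apply B.ext_generators <;> intros <;>
    simp [B.br_L_L, B.br_L_W, B.br_L_Q, B.br_C1_right, B.br_C2_right, apply_ite (B.coordL j)]
  all_goals split_ifs <;> first | omega | (subst_vars; push_cast; ring)

theorem coordW_L_br (m : ℤ) : B.coordW j (B.br (B.L m) v) = (2 * m - j) * B.coordW (j - m) v := by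
  suffices h : B.coordW j ∘ₗ B.br (B.L m) = ((2 * m - j : ℂ)) • B.coordW (j - m) from
    LinearMap.congr_fun h v
  apply B.ext_generators <;> intros <;>
    simp [B.br_L_L, B.br_L_W, B.br_L_Q, B.br_C1_right, B.br_C2_right, apply_ite (B.coordW j)]
  all_goals split_ifs <;> first | omega | (subst_vars; push_cast; ring)

theorem coordQ_L_br (m : ℤ) :
    B.coordQ j (B.br (B.L m) v) = (3 * m / 2 - j - 1 / 2) * B.coordQ (j - m) v := by
  suffices h : B.coordQ j ∘ₗ B.br (B.L m) = ((3 * m / 2 - j - 1 / 2 : ℂ)) • B.coordQ (j - m) from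
    LinearMap.congr_fun h v
  apply B.ext_generators <;> intros <;>
    simp [B.br_L_L, B.br_L_W, B.br_L_Q, B.br_C1_right, B.br_C2_right, apply_ite (B.coordQ j)]
  all_goals split_ifs <;> first | omega | (subst_vars; push_cast; ring)

theorem coordW_W_br (m : ℤ) : B.coordW j (B.br (B.W m) v) = (2 * m - j) * B.coordL (j - m) v := by
  suffices h : B.coordW j ∘ₗ B.br (B.W m) = ((2 * m - j : ℂ)) • B.coordL (j - m) from
    LinearMap.congr_fun h v
  apply B.ext_generators <;> intros <;>
    simp [B.br_W_L, B.br_L_W, B.br_W_W, B.br_W_Q, B.br_C1_right, B.br_C2_right,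
      apply_ite (B.coordW j)]
  all_goals split_ifs <;> first | omega | (subst_vars; push_cast; ring)

theorem coordQ_W_br (m : ℤ) : B.coordQ j (B.br (B.W m) v) = 0 := by
  suffices h : B.coordQ j ∘ₗ B.br (B.W m) = 0 from LinearMap.congr_fun h v
  apply B.ext_generators <;> intros <;>
    simp [B.br_W_L, B.br_L_W, B.br_W_W, B.br_W_Q, B.br_C1_right, B.br_C2_right,
      apply_ite (B.coordQ j)]

theorem coordW_Q_br (k : ℤ) : B.coordW j (B.br (B.Q k) v) = 2 * B.coordQ (j - k - 1) v := by
  suffices h : B.coordW j ∘ₗ B.br (B.Q k) = (2 : ℂ) • B.coordQ (j - k - 1) from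
    LinearMap.congr_fun h v
  apply B.ext_generators <;> intros <;>
    simp [B.br_Q_L, B.br_Q_W, B.br_Q_Q, B.br_C1_right, B.br_C2_right, apply_ite (B.coordW j)]
  all_goals split_ifs <;> first | omega | (subst_vars; ring)

theorem coordW_br_Q (k : ℤ) : B.coordW j (B.br v (B.Q k)) = 2 * B.coordQ (j - k - 1) v := by
  suffices h : B.coordW j ∘ₗ B.br.flip (B.Q k) = (2 : ℂ) • B.coordQ (j - k - 1) from
    LinearMap.congr_fun h v
  apply B.ext_generators <;> intros <;>
    simp [B.br_L_Q, B.br_W_Q, B.br_Q_Q, B.br_C1_left, B.br_C2_left, apply_ite (B.coordW j)]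
  all_goals split_ifs <;> first | omega | (subst_vars; ring)

theorem coordQ_br_Q (k : ℤ) :
    B.coordQ j (B.br v (B.Q k)) = ((j - k) / 2 - k - 1 / 2) * B.coordL (j - k) v := by
  suffices h : B.coordQ j ∘ₗ B.br.flip (B.Q k) =
      (((j - k) / 2 - k - 1 / 2 : ℂ)) • B.coordL (j - k) from LinearMap.congr_fun h v
  apply B.ext_generators <;> intros <;>
    simp [B.br_L_Q, B.br_W_Q, B.br_Q_Q, B.br_C1_left, B.br_C2_left, apply_ite (B.coordQ j)]
  all_goals split_ifs <;> first | omega | (subst_vars; push_cast; ring)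

theorem coordL_br_L (n : ℤ) : B.coordL j (B.br v (B.L n)) = (j - 2 * n) * B.coordL (j - n) v := by
  rw [B.br_comm_of_even (B.L_mem n), map_neg, coordL_L_br]; ring

theorem coordW_br_L (n : ℤ) : B.coordW j (B.br v (B.L n)) = (j - 2 * n) * B.coordW (j - n) v := by
  rw [B.br_comm_of_even (B.L_mem n), map_neg, coordW_L_br]; ring

theorem coordQ_br_L (n : ℤ) :
    B.coordQ j (B.br v (B.L n)) = (j + 1 / 2 - 3 * n / 2) * B.coordQ (j - n) v := by
  rw [B.br_comm_of_even (B.L_mem n), map_neg, coordQ_L_br]; ring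

theorem coordW_br_W (n : ℤ) : B.coordW j (B.br v (B.W n)) = (j - 2 * n) * B.coordL (j - n) v := by
  rw [B.br_comm_of_even (B.W_mem n), map_neg, coordW_W_br]; ring

end coordinates_of_brackets

def center : Submodule ℂ V := Submodule.span ℂ {B.C1, B.C2}

theorem C1_mem_center : B.C1 ∈ B.center := Submodule.subset_span (by simp)
theorem C2_mem_center : B.C2 ∈ B.center := Submodule.subset_span (by simp)

theorem mem_center_iff {v : V} : v ∈ B.center ↔
    (∀ j, B.coordL j v = 0) ∧ (∀ j, B.coordW j v = 0) ∧ ∀ j, B.coordQ j v = 0 := by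
  constructor
  · intro hv
    obtain ⟨a, b, rfl⟩ := Submodule.mem_span_pair.mp hv
    simp
  · rintro ⟨hL, hW, hQ⟩
    refine Submodule.mem_span_pair.mpr ⟨B.bV.repr v (.inl (.inr (.inl ()))),
      B.bV.repr v (.inl (.inr (.inr ()))), B.bV.ext_elem fun i => ?_⟩
    rcases i with ((q | q) | (_ | _)) | q
    · simpa [B.C1_eq, B.C2_eq, Finsupp.single_apply, coordL] using (hL q).symm
    · simpa [B.C1_eq, B.C2_eq, Finsupp.single_apply, coordW] using (hW q).symm
    · simp [B.C1_eq, B.C2_eq]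
    · simp [B.C1_eq, B.C2_eq]
    · simpa [B.C1_eq, B.C2_eq, Finsupp.single_apply, coordQ] using (hQ q).symm

theorem br_eq_zero_of_mem_center_left {z : V} (hz : z ∈ B.center) (v : V) : B.br z v = 0 := by
  obtain ⟨a, b, rfl⟩ := Submodule.mem_span_pair.mp hz
  simp [B.br_C1_left, B.br_C2_left]

theorem br_eq_zero_of_mem_center_right {z : V} (hz : z ∈ B.center) (v : V) : B.br v z = 0 := by
  obtain ⟨a, b, rfl⟩ := Submodule.mem_span_pair.mp hz
  simp [B.br_C1_right, B.br_C2_right]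

theorem mem_center_of_br_L_eq_zero {v : V} (h0 : B.br (B.L 0) v = 0) (h1 : B.br (B.L 1) v = 0) :
    v ∈ B.center := by
  refine B.mem_center_iff.mpr ⟨fun j => ?_, fun j => ?_, fun j => ?_⟩
  · rcases eq_or_ne j 0 with rfl | hj
    · have t := congrArg (B.coordL 1) h1
      norm_num [coordL_L_br] at t
      exact t
    · have t := congrArg (B.coordL j) h0
      simp only [coordL_L_br, map_zero, sub_zero] at t
      exact eq_zero_of_intCast_mul_eq_zero (c := -j) (by omega) (by push_cast; linear_combination t)
  · rcases eq_or_ne j 0 with rfl | hj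
    · have t := congrArg (B.coordW 1) h1
      norm_num [coordW_L_br] at t
      exact t
    · have t := congrArg (B.coordW j) h0
      simp only [coordW_L_br, map_zero, sub_zero] at t
      exact eq_zero_of_intCast_mul_eq_zero (c := -j) (by omega) (by push_cast; linear_combination t)
  · have t := congrArg (B.coordQ j) h0
    simp only [coordQ_L_br, map_zero, sub_zero] at t
    exact eq_zero_of_intCast_mul_eq_zero (c := -2 * j - 1) (by omega)
      (by push_cast; linear_combination 2 * t)

theorem eq_zero_of_map_br_eq_zero {M : Type} [AddCommGroup M] [Module ℂ M] (f : V →ₗ[ℂ] M)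
    (hf : ∀ p q, ∀ x ∈ B.grade p, ∀ y ∈ B.grade q, f (B.br x y) = 0) : f = 0 := by
  have hLL := fun m n => hf 0 0 _ (B.L_mem m) _ (B.L_mem n)
  have hLW := fun m n => hf 0 0 _ (B.L_mem m) _ (B.W_mem n)
  have hL0 : f (B.L 0) = 0 := by simpa [B.br_L_L] using hLL 1 (-1)
  have hW0 : f (B.W 0) = 0 := by simpa [B.br_L_W] using hLW 1 (-1)
  refine B.ext_generators (fun m => ?_) (fun m => ?_) ?_ ?_ (fun k => ?_)
  · rcases eq_or_ne m 0 with rfl | hm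
    · simpa using hL0
    · simpa [B.br_L_L_zero, hm] using hLL m 0
  · rcases eq_or_ne m 0 with rfl | hm
    · simpa using hW0
    · simpa [B.br_L_W_zero, hm] using hLW m 0
  · have := hLL 2 (-2)
    rw [B.br_L_L] at this
    norm_num [hL0] at this
    simpa using this
  · have := hLW 2 (-2)
    rw [B.br_L_W] at this
    norm_num [hW0] at this
    simpa using this
  · have := hf 0 1 _ (B.L_mem 0) _ (B.Q_mem k)
    rw [B.br_L_zero_Q, map_smul, smul_eq_zero] at this
    simpa using this.resolve_left (neg_ne_zero.mpr (intCast_add_half_ne_zero k))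

def IsSuperDerivation (p : ZMod 2) (D : V →ₗ[ℂ] V) : Prop :=
  ∀ q, ∀ y ∈ B.grade q, ∀ z, D (B.br y z) = B.br (D y) z + B.sgn (p * q) • B.br y (D z)

namespace IsSuperDerivation

variable {B} {p : ZMod 2} {D : V →ₗ[ℂ] V}

theorem map_br_of_even (hD : B.IsSuperDerivation p D) {y : V} (hy : y ∈ B.grade 0) (z : V) :
    D (B.br y z) = B.br (D y) z + B.br y (D z) := by
  rw [hD 0 y hy z, mul_zero, B.sgn_zero, one_smul]

theorem apply_mem_center_of_br_eq_zero (hD : B.IsSuperDerivation p D) {c : V}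
    (hc : ∀ y, B.br y c = 0) : D c ∈ B.center := by
  refine B.mem_center_of_br_L_eq_zero ?_ ?_ <;>
  · simpa [hc] using (hD.map_br_of_even (B.L_mem _) c).symm

theorem coordL_apply_W (hD : B.IsSuperDerivation p D) (m j : ℤ) : B.coordL j (D (B.W m)) = 0 := by
  have t := congrArg (B.coordQ 0) (hD.map_br_of_even (B.W_mem m) (B.Q (-j)))
  simp only [B.br_W_Q, map_zero, map_add, coordQ_br_Q, coordQ_W_br, sub_neg_eq_add, zero_add] at t
  exact eq_zero_of_intCast_mul_eq_zero (c := 3 * j - 1) (by omega)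
    (by push_cast at t ⊢; linear_combination -2 * t)

theorem coordQ_apply_W (hD : B.IsSuperDerivation p D) (m j : ℤ) : B.coordQ j (D (B.W m)) = 0 := by
  have t := congrArg (B.coordQ j) (hD.map_br_of_even (B.W_mem m) (B.L 0))
  simp only [B.br_W_L_zero, map_smul, map_add, coordQ_br_L, coordQ_W_br, smul_eq_mul,
    sub_zero, add_zero] at t
  exact eq_zero_of_intCast_mul_eq_zero (c := 2 * m - 2 * j - 1) (by omega)
    (by push_cast at t ⊢; linear_combination 2 * t)

theorem coordW_apply_W (hD : B.IsSuperDerivation p D) (m j : ℤ) :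
    ((m : ℂ) - j) * B.coordW j (D (B.W m)) = (2 * m - j) * B.coordL (j - m) (D (B.L 0)) := by
  have t := congrArg (B.coordW j) (hD.map_br_of_even (B.W_mem m) (B.L 0))
  simp only [B.br_W_L_zero, map_smul, map_add, coordW_br_L, coordW_W_br, smul_eq_mul,
    sub_zero] at t
  linear_combination t

theorem coordL_apply_Q (hD : B.IsSuperDerivation p D) (k j : ℤ) : B.coordL j (D (B.Q k)) = 0 := by
  have t := congrArg (B.coordW (2 * j + 1)) (hD 1 _ (B.Q_mem k) (B.W (j + 1)))
  simp only [B.br_Q_W, map_zero, map_add, map_smul, coordW_br_W, coordW_Q_br, coordQ_apply_W hD,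
    smul_eq_mul, mul_zero, add_zero, show 2 * j + 1 - (j + 1) = j by ring] at t
  exact eq_zero_of_intCast_mul_eq_zero (c := -1) (by omega)
    (by push_cast at t ⊢; linear_combination -t)

theorem coordL_apply_L (hD : B.IsSuperDerivation p D) (n j : ℤ) :
    ((j : ℂ) - n) * B.coordL j (D (B.L n)) = (j - 2 * n) * B.coordL (j - n) (D (B.L 0)) := by
  have t := congrArg (B.coordL j) (hD.map_br_of_even (B.L_mem 0) (B.L n))
  simp only [B.br_L_zero_L, map_smul, map_add, coordL_br_L, coordL_L_br, smul_eq_mul,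
    sub_zero] at t
  push_cast at t
  linear_combination t

theorem coordW_apply_L (hD : B.IsSuperDerivation p D) (n j : ℤ) :
    ((j : ℂ) - n) * B.coordW j (D (B.L n)) = (j - 2 * n) * B.coordW (j - n) (D (B.L 0)) := by
  have t := congrArg (B.coordW j) (hD.map_br_of_even (B.L_mem 0) (B.L n))
  simp only [B.br_L_zero_L, map_smul, map_add, coordW_br_L, coordW_L_br, smul_eq_mul,
    sub_zero] at t
  push_cast at t
  linear_combination t

theorem coordQ_apply_L (hD : B.IsSuperDerivation p D) (n j : ℤ) :
    ((j : ℂ) + 1 / 2 - n) * B.coordQ j (D (B.L n)) =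
      (j + 1 / 2 - 3 * n / 2) * B.coordQ (j - n) (D (B.L 0)) := by
  have t := congrArg (B.coordQ j) (hD.map_br_of_even (B.L_mem 0) (B.L n))
  simp only [B.br_L_zero_L, map_smul, map_add, coordQ_br_L, coordQ_L_br, smul_eq_mul,
    sub_zero] at t
  push_cast at t
  linear_combination t

theorem coordQ_apply_Q (hD : B.IsSuperDerivation p D) (k j : ℤ) :
    ((j : ℂ) - k) * B.coordQ j (D (B.Q k)) =
      (j - 3 * k - 1) / 2 * B.coordL (j - k) (D (B.L 0)) := by
  have t := congrArg (B.coordQ j) (hD.map_br_of_even (B.L_mem 0) (B.Q k))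
  simp only [B.br_L_zero_Q, map_smul, map_add, coordQ_br_Q, coordQ_L_br, smul_eq_mul,
    sub_zero] at t
  push_cast at t
  linear_combination t

theorem coordW_apply_Q (hD : B.IsSuperDerivation p D) (k j : ℤ) :
    ((j : ℂ) - k - 1 / 2) * B.coordW j (D (B.Q k)) = 2 * B.coordQ (j - k - 1) (D (B.L 0)) := by
  have t := congrArg (B.coordW j) (hD.map_br_of_even (B.L_mem 0) (B.Q k))
  simp only [B.br_L_zero_Q, map_smul, map_add, coordW_br_Q, coordW_L_br, smul_eq_mul,
    sub_zero] at t
  push_cast at t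
  linear_combination t

theorem coordL_apply_L_self (hD : B.IsSuperDerivation p D) (hC1 : D B.C1 = 0) (m : ℤ) :
    B.coordL m (D (B.L m)) = m * B.coordL 1 (D (B.L 1)) := by
  refine diag_eq_mul_of_witt_rec (F := fun m j => B.coordL j (D (B.L m))) (fun m n j => ?_) m
  have t := congrArg (B.coordL j) (hD.map_br_of_even (B.L_mem m) (B.L n))
  simpa only [B.br_L_L, map_add, map_smul, hC1, smul_zero, add_zero, coordL_br_L, coordL_L_br,
    smul_eq_mul] using t

theorem coordW_apply_L_self (hD : B.IsSuperDerivation p D) (hC1 : D B.C1 = 0) (m : ℤ) :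
    B.coordW m (D (B.L m)) = m * B.coordW 1 (D (B.L 1)) := by
  refine diag_eq_mul_of_witt_rec (F := fun m j => B.coordW j (D (B.L m))) (fun m n j => ?_) m
  have t := congrArg (B.coordW j) (hD.map_br_of_even (B.L_mem m) (B.L n))
  simpa only [B.br_L_L, map_add, map_smul, hC1, smul_zero, add_zero, coordW_br_L, coordW_L_br,
    smul_eq_mul] using t

theorem coordW_apply_W_self (hD : B.IsSuperDerivation p D) (hC1 : D B.C1 = 0) (m : ℤ) :
    B.coordW m (D (B.W m)) = B.coordW 0 (D (B.W 0)) + m * B.coordL 1 (D (B.L 1)) := by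
  rcases eq_or_ne m 0 with rfl | hm
  · simp
  have t := congrArg (B.coordW m) (hD.map_br_of_even (B.L_mem m) (B.W 0))
  simp only [B.br_L_W_zero, map_smul, map_add, coordW_br_W, coordW_L_br, smul_eq_mul,
    sub_zero, sub_self] at t
  rw [hD.coordL_apply_L_self hC1] at t
  refine mul_left_cancel₀ (Int.cast_ne_zero.mpr hm) ?_
  linear_combination t

theorem coordQ_apply_Q_self (hD : B.IsSuperDerivation p D) (hC1 : D B.C1 = 0) (k : ℤ) :
    B.coordQ k (D (B.Q k)) = B.coordQ 0 (D (B.Q 0)) + k * B.coordL 1 (D (B.L 1)) := by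
  have step : ∀ m k : ℤ, m ≠ 2 * k + 1 → B.coordQ (m + k) (D (B.Q (m + k))) =
      m * B.coordL 1 (D (B.L 1)) + B.coordQ k (D (B.Q k)) := fun m k hmk => by
    have t := congrArg (B.coordQ (m + k)) (hD.map_br_of_even (B.L_mem m) (B.Q k))
    simp only [B.br_L_Q, map_smul, map_add, coordQ_br_Q, coordQ_L_br, smul_eq_mul,
      add_sub_cancel_right, add_sub_cancel_left] at t
    rw [hD.coordL_apply_L_self hC1] at t
    have hne : (m : ℂ) / 2 - (k + 1 / 2) ≠ 0 := fun h => hmk (by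
      have : ((m - 2 * k - 1 : ℤ) : ℂ) = 0 := by push_cast; linear_combination 2 * h
      have := Int.cast_eq_zero.mp this
      omega)
    refine mul_left_cancel₀ hne ?_
    push_cast at t
    linear_combination t
  rcases eq_or_ne k 1 with rfl | hk
  · have h2 := step 2 (-1) (by norm_num)
    have h1 := step (-1) 0 (by norm_num)
    norm_num at h1 h2
    rw [h2, h1]; push_cast; ring
  · simpa [add_comm] using step k 0 (by omega)

theorem apply_W_sub_mem_center (hD : B.IsSuperDerivation p D) (hC1 : D B.C1 = 0)
    (hL0 : D (B.L 0) ∈ B.center) (hL1 : D (B.L 1) ∈ B.center) (m : ℤ) :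
    D (B.W m) - B.coordW 0 (D (B.W 0)) • B.W m ∈ B.center := by
  have hg := (B.mem_center_iff.mp hL1).1 1
  refine B.mem_center_iff.mpr ⟨fun j => ?_, fun j => ?_, fun j => ?_⟩
  · simp [hD.coordL_apply_W]
  · rcases eq_or_ne m j with rfl | hj
    · rw [map_sub, hD.coordW_apply_W_self hC1, hg]; simp
    · have t := hD.coordW_apply_W m j
      rw [(B.mem_center_iff.mp hL0).1, mul_zero] at t
      simp only [map_sub, map_smul, coordW_W, if_neg hj, smul_zero, sub_zero]
      exact eq_zero_of_intCast_mul_eq_zero (c := m - j) (by omega) (by push_cast; exact t)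
  · simp [hD.coordQ_apply_W]

theorem apply_Q_sub_mem_center (hD : B.IsSuperDerivation p D) (hC1 : D B.C1 = 0)
    (hL0 : D (B.L 0) ∈ B.center) (hL1 : D (B.L 1) ∈ B.center) (k : ℤ) :
    D (B.Q k) - B.coordQ 0 (D (B.Q 0)) • B.Q k ∈ B.center := by
  have hg := (B.mem_center_iff.mp hL1).1 1
  obtain ⟨hL0L, -, hL0Q⟩ := B.mem_center_iff.mp hL0
  refine B.mem_center_iff.mpr ⟨fun j => ?_, fun j => ?_, fun j => ?_⟩
  · simp [hD.coordL_apply_Q]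
  · have t := hD.coordW_apply_Q k j
    rw [hL0Q, mul_zero] at t
    simp only [map_sub, map_smul, coordW_Q, smul_zero, sub_zero]
    refine (mul_eq_zero.mp t).resolve_left fun h => intCast_add_half_ne_zero (k - j) ?_
    push_cast; linear_combination -h
  · rcases eq_or_ne k j with rfl | hj
    · rw [map_sub, hD.coordQ_apply_Q_self hC1, hg]; simp
    · have t := hD.coordQ_apply_Q k j
      rw [hL0L, mul_zero] at t
      simp only [map_sub, map_smul, coordQ_Q, if_neg hj, smul_zero, sub_zero]
      exact eq_zero_of_intCast_mul_eq_zero (c := j - k) (by omega) (by push_cast; exact t)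

end IsSuperDerivation

structure CommPostLie where
  circ : V →ₗ[ℂ] V →ₗ[ℂ] V
  circ_supercomm : ∀ p q : ZMod 2, ∀ x ∈ B.grade p, ∀ y ∈ B.grade q,
    circ x y = B.sgn (p * q) • circ y x
  circ_br_left : ∀ p q t : ZMod 2, ∀ x ∈ B.grade p, ∀ y ∈ B.grade q, ∀ z ∈ B.grade t,
    circ (B.br x y) z = circ x (circ y z) - B.sgn (p * q) • circ y (circ x z)
  circ_br_right : ∀ p q t : ZMod 2, ∀ x ∈ B.grade p, ∀ y ∈ B.grade q, ∀ z ∈ B.grade t,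
    circ x (B.br y z) = B.br (circ x y) z + B.sgn (p * q) • B.br y (circ x z)

namespace CommPostLie

variable {B} (P : B.CommPostLie)

theorem isSuperDerivation {p : ZMod 2} {x : V} (hx : x ∈ B.grade p) :
    B.IsSuperDerivation p (P.circ x) := fun q y hy z => by
  suffices h : P.circ x ∘ₗ B.br y = B.br (P.circ x y) + B.sgn (p * q) • (B.br y ∘ₗ P.circ x) from
    by simpa using LinearMap.congr_fun h z
  exact B.ext_homogeneous fun t z hz => by simpa using P.circ_br_right p q t x hx y hy z hz

theorem circ_comm_of_even {y : V} (hy : y ∈ B.grade 0) (v : V) : P.circ v y = P.circ y v := by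
  suffices h : P.circ.flip y = P.circ y from LinearMap.congr_fun h v
  refine B.ext_homogeneous fun p x hx => ?_
  simp [P.circ_supercomm p 0 x hx y hy, B.sgn_zero]

theorem circ_eq_zero_of_br_eq_zero {c : V} (hc0 : c ∈ B.grade 0) (hc : ∀ y, B.br y c = 0) (v : V) :
    P.circ c v = 0 := by
  have hcent : ∀ p, ∀ x ∈ B.grade p, P.circ c x ∈ B.center := fun p x hx => by
    rw [← P.circ_comm_of_even hc0]
    exact (P.isSuperDerivation hx).apply_mem_center_of_br_eq_zero hc
  suffices h : P.circ c = 0 by simp [h]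
  refine B.eq_zero_of_map_br_eq_zero _ fun p q x hx y hy => ?_
  rw [P.isSuperDerivation hc0 p x hx y, B.br_eq_zero_of_mem_center_left (hcent p x hx),
    B.br_eq_zero_of_mem_center_right (hcent q y hy), smul_zero, add_zero]

theorem circ_eq_zero_of_mem_center_left {z : V} (hz : z ∈ B.center) (v : V) : P.circ z v = 0 := by
  obtain ⟨a, b, rfl⟩ := Submodule.mem_span_pair.mp hz
  simp [P.circ_eq_zero_of_br_eq_zero B.C1_mem B.br_C1_right,
    P.circ_eq_zero_of_br_eq_zero B.C2_mem B.br_C2_right]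

theorem circ_eq_zero_of_mem_center_right {z : V} (hz : z ∈ B.center) (v : V) :
    P.circ v z = 0 := by
  obtain ⟨a, b, rfl⟩ := Submodule.mem_span_pair.mp hz
  simp [P.circ_comm_of_even B.C1_mem, P.circ_comm_of_even B.C2_mem,
    P.circ_eq_zero_of_br_eq_zero B.C1_mem B.br_C1_right,
    P.circ_eq_zero_of_br_eq_zero B.C2_mem B.br_C2_right]

theorem circ_C1_eq_zero (x : V) : P.circ x B.C1 = 0 :=
  P.circ_eq_zero_of_mem_center_right B.C1_mem_center x

theorem circ_L_L_mem_center (a b : ℤ) : P.circ (B.L a) (B.L b) ∈ B.center := by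
  have hD := fun a => P.isSuperDerivation (B.L_mem a)
  have hsym : ∀ a b, P.circ (B.L a) (B.L b) = P.circ (B.L b) (B.L a) := fun a b =>
    P.circ_comm_of_even (B.L_mem b) _
  refine B.mem_center_iff.mpr ⟨fun j => ?_, fun j => ?_, fun j => ?_⟩
  · exact eq_zero_of_symm_of_shift (X := fun a b j => B.coordL j (P.circ (B.L a) (B.L b)))
      (fun a b j => (hD a).coordL_apply_L b j) (fun a b j => by simp only [hsym a b])
      (fun a b => (hD a).coordL_apply_L_self (P.circ_C1_eq_zero _) b) a b j
  · exact eq_zero_of_symm_of_shift (X := fun a b j => B.coordW j (P.circ (B.L a) (B.L b)))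
      (fun a b j => (hD a).coordW_apply_L b j) (fun a b j => by simp only [hsym a b])
      (fun a b => (hD a).coordW_apply_L_self (P.circ_C1_eq_zero _) b) a b j
  · exact eq_zero_of_symm_of_half_shift (X := fun a b j => B.coordQ j (P.circ (B.L a) (B.L b)))
      (fun a b j => (hD a).coordQ_apply_L b j) (fun a b j => by simp only [hsym a b]) a b j

theorem circ_W_sub_mem_center {p : ZMod 2} {x : V} (hx : x ∈ B.grade p)
    (hL0 : P.circ x (B.L 0) ∈ B.center) (hL1 : P.circ x (B.L 1) ∈ B.center) (m : ℤ) :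
    P.circ x (B.W m) - B.coordW 0 (P.circ x (B.W 0)) • B.W m ∈ B.center :=
  (P.isSuperDerivation hx).apply_W_sub_mem_center (P.circ_C1_eq_zero x) hL0 hL1 m

theorem circ_Q_sub_mem_center {p : ZMod 2} {x : V} (hx : x ∈ B.grade p)
    (hL0 : P.circ x (B.L 0) ∈ B.center) (hL1 : P.circ x (B.L 1) ∈ B.center) (k : ℤ) :
    P.circ x (B.Q k) - B.coordQ 0 (P.circ x (B.Q 0)) • B.Q k ∈ B.center :=
  (P.isSuperDerivation hx).apply_Q_sub_mem_center (P.circ_C1_eq_zero x) hL0 hL1 k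

-- `W m ∘ L n = L n ∘ W m` has no `W (s + n)`-component, and the shift relation of `W m ∘ -`
-- transports this to the `W s`-component of `W m ∘ L 0`.
theorem coordW_circ_W_L_zero (m s : ℤ) : B.coordW s (P.circ (B.W m) (B.L 0)) = 0 := by
  obtain ⟨n, hns, hnm⟩ : ∃ n, n ≠ s ∧ s + n ≠ m :=
    if h : 2 * s + 1 = m then ⟨s + 2, by omega, by omega⟩ else ⟨s + 1, by omega, by omega⟩
  have hoff := (B.mem_center_iff.mp (P.circ_W_sub_mem_center (B.L_mem n)
    (P.circ_L_L_mem_center n 0) (P.circ_L_L_mem_center n 1) m)).2.1 (s + n)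
  have t := (P.isSuperDerivation (B.W_mem m)).coordW_apply_L n (s + n)
  rw [P.circ_comm_of_even (B.L_mem n)] at t
  simp only [map_sub, map_smul, coordW_W, if_neg (Ne.symm hnm), smul_zero, sub_zero] at hoff
  rw [hoff, mul_zero, add_sub_cancel_right] at t
  exact eq_zero_of_intCast_mul_eq_zero (c := s - n) (by omega)
    (by push_cast at t ⊢; linear_combination -t)

theorem coordQ_circ_Q_L_zero (k s : ℤ) : B.coordQ s (P.circ (B.Q k) (B.L 0)) = 0 := by
  obtain ⟨n, hnk⟩ : ∃ n, s + 2 * n ≠ k :=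
    if h : s + 2 = k then ⟨2, by omega⟩ else ⟨1, by omega⟩
  have hoff := (B.mem_center_iff.mp (P.circ_Q_sub_mem_center (B.L_mem (2 * n))
    (P.circ_L_L_mem_center _ 0) (P.circ_L_L_mem_center _ 1) k)).2.2 (s + 2 * n)
  have t := (P.isSuperDerivation (B.Q_mem k)).coordQ_apply_L (2 * n) (s + 2 * n)
  rw [P.circ_comm_of_even (B.L_mem _)] at t
  simp only [map_sub, map_smul, coordQ_Q, if_neg (Ne.symm hnk), smul_zero, sub_zero] at hoff
  rw [hoff, mul_zero, add_sub_cancel_right] at t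
  refine ((mul_eq_zero.mp t.symm).resolve_left fun h => intCast_add_half_ne_zero (s - n) ?_)
  push_cast at h ⊢; linear_combination h

theorem circ_L_W_mem_center (a m : ℤ) : P.circ (B.L a) (B.W m) ∈ B.center := by
  have h := P.circ_W_sub_mem_center (B.L_mem a) (P.circ_L_L_mem_center a 0)
    (P.circ_L_L_mem_center a 1) m
  suffices hα : B.coordW 0 (P.circ (B.L a) (B.W 0)) = 0 by simpa [hα] using h
  rw [P.circ_comm_of_even (B.W_mem 0)]
  rcases eq_or_ne a 0 with rfl | ha
  · exact P.coordW_circ_W_L_zero 0 0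
  · have t := (P.isSuperDerivation (B.W_mem 0)).coordW_apply_L a 0
    rw [P.coordW_circ_W_L_zero, mul_zero] at t
    exact eq_zero_of_intCast_mul_eq_zero (c := -a) (by omega)
      (by push_cast at t ⊢; linear_combination t)

theorem circ_L_Q_mem_center (a k : ℤ) : P.circ (B.L a) (B.Q k) ∈ B.center := by
  have h := P.circ_Q_sub_mem_center (B.L_mem a) (P.circ_L_L_mem_center a 0)
    (P.circ_L_L_mem_center a 1) k
  suffices hβ : B.coordQ 0 (P.circ (B.L a) (B.Q 0)) = 0 by simpa [hβ] using h
  rw [← P.circ_comm_of_even (B.L_mem a)]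
  have t := (P.isSuperDerivation (B.Q_mem 0)).coordQ_apply_L a 0
  rw [P.coordQ_circ_Q_L_zero, mul_zero] at t
  refine (mul_eq_zero.mp t).resolve_left fun h => intCast_add_half_ne_zero (-a) ?_
  push_cast at h ⊢; linear_combination h

theorem circ_L_mem_center (a : ℤ) (v : V) : P.circ (B.L a) v ∈ B.center :=
  B.map_mem_of_generators _ (P.circ_L_L_mem_center a) (P.circ_L_W_mem_center a)
    (by simp [P.circ_eq_zero_of_mem_center_right B.C1_mem_center])
    (by simp [P.circ_eq_zero_of_mem_center_right B.C2_mem_center]) (P.circ_L_Q_mem_center a) v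

theorem circ_L_right_mem_center (x : V) (a : ℤ) : P.circ x (B.L a) ∈ B.center := by
  rw [P.circ_comm_of_even (B.L_mem a)]; exact P.circ_L_mem_center a x

-- The diagonal entry of `W n ∘ -` is the `W (n + 1)`-component of `W n ∘ W (n + 1)`, which is
-- an off-diagonal entry of `W (n + 1) ∘ -`. The same trick handles the other generators.
theorem circ_W_W_mem_center (n m : ℤ) : P.circ (B.W n) (B.W m) ∈ B.center := by
  have hsub := fun n => P.circ_W_sub_mem_center (B.W_mem n) (P.circ_L_right_mem_center _ 0)
    (P.circ_L_right_mem_center _ 1)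
  suffices hα : B.coordW 0 (P.circ (B.W n) (B.W 0)) = 0 by simpa [hα] using hsub n m
  have h1 := (B.mem_center_iff.mp (hsub n (n + 1))).2.1 (n + 1)
  have h2 := (B.mem_center_iff.mp (hsub (n + 1) n)).2.1 (n + 1)
  rw [P.circ_comm_of_even (B.W_mem (n + 1))] at h1
  simp only [map_sub, map_smul, coordW_W, ↓reduceIte, smul_eq_mul, mul_one, left_eq_add,
    one_ne_zero, mul_zero, sub_zero] at h1 h2
  linear_combination h2 - h1

theorem circ_W_Q_mem_center (n k : ℤ) : P.circ (B.W n) (B.Q k) ∈ B.center := by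
  have h := P.circ_Q_sub_mem_center (B.W_mem n) (P.circ_L_right_mem_center _ 0)
    (P.circ_L_right_mem_center _ 1) k
  suffices hβ : B.coordQ 0 (P.circ (B.W n) (B.Q 0)) = 0 by simpa [hβ] using h
  have h' := (B.mem_center_iff.mp (P.circ_W_sub_mem_center (B.Q_mem 0)
    (P.circ_L_right_mem_center _ 0) (P.circ_L_right_mem_center _ 1) n)).2.2 0
  rw [← P.circ_comm_of_even (B.W_mem n)]
  simpa using h'

theorem circ_Q_W_mem_center (q m : ℤ) : P.circ (B.Q q) (B.W m) ∈ B.center := by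
  have h := P.circ_W_sub_mem_center (B.Q_mem q) (P.circ_L_right_mem_center _ 0)
    (P.circ_L_right_mem_center _ 1) m
  suffices hα : B.coordW 0 (P.circ (B.Q q) (B.W 0)) = 0 by simpa [hα] using h
  have h' := (B.mem_center_iff.mp (P.circ_Q_sub_mem_center (B.W_mem 0)
    (P.circ_L_right_mem_center _ 0) (P.circ_L_right_mem_center _ 1) q)).2.1 0
  rw [P.circ_comm_of_even (B.W_mem 0)]
  simpa using h'

theorem circ_Q_Q_mem_center (q k : ℤ) : P.circ (B.Q q) (B.Q k) ∈ B.center := by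
  have hsub := fun q => P.circ_Q_sub_mem_center (B.Q_mem q) (P.circ_L_right_mem_center _ 0)
    (P.circ_L_right_mem_center _ 1)
  suffices hβ : B.coordQ 0 (P.circ (B.Q q) (B.Q 0)) = 0 by simpa [hβ] using hsub q k
  have h1 := (B.mem_center_iff.mp (hsub q (q + 1))).2.2 (q + 1)
  have h2 := (B.mem_center_iff.mp (hsub (q + 1) q)).2.2 (q + 1)
  rw [P.circ_supercomm 1 1 _ (B.Q_mem q) _ (B.Q_mem (q + 1)), mul_one, B.sgn_one] at h1
  simp only [neg_smul, one_smul, map_sub, map_neg, map_smul, coordQ_Q, ↓reduceIte, smul_eq_mul,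
    mul_one, left_eq_add, one_ne_zero, mul_zero, sub_zero] at h1 h2
  linear_combination -h2 - h1

theorem circ_mem_center (x y : V) : P.circ x y ∈ B.center := by
  have hC1 := P.circ_eq_zero_of_mem_center_right B.C1_mem_center
  have hC2 := P.circ_eq_zero_of_mem_center_right B.C2_mem_center
  have hW : ∀ n v, P.circ (B.W n) v ∈ B.center := fun n =>
    B.map_mem_of_generators _ (P.circ_L_right_mem_center _) (P.circ_W_W_mem_center n)
      (by simp [hC1]) (by simp [hC2]) (P.circ_W_Q_mem_center n)
  have hQ : ∀ q v, P.circ (B.Q q) v ∈ B.center := fun q =>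
    B.map_mem_of_generators _ (P.circ_L_right_mem_center _) (P.circ_Q_W_mem_center q)
      (by simp [hC1]) (by simp [hC2]) (P.circ_Q_Q_mem_center q)
  exact B.map_mem_of_generators (P.circ.flip y) (fun a => P.circ_L_mem_center a y)
    (fun n => hW n y) (by simp [P.circ_eq_zero_of_mem_center_left B.C1_mem_center])
    (by simp [P.circ_eq_zero_of_mem_center_left B.C2_mem_center]) (fun q => hQ q y) x

theorem circ_eq_zero (x y : V) : P.circ x y = 0 := by
  suffices h : P.circ = 0 by simp [h]
  refine B.eq_zero_of_map_br_eq_zero _ fun p q x hx y hy => B.ext_homogeneous fun t z hz => ?_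
  rw [P.circ_br_left p q t x hx y hy z hz,
    P.circ_eq_zero_of_mem_center_right (P.circ_mem_center y z),
    P.circ_eq_zero_of_mem_center_right (P.circ_mem_center x z)]
  simp

end CommPostLie

end SuperBMS3

theorem postLie_BMS3_trivial
    (V : Type) [AddCommGroup V] [Module ℂ V]
    (bV : Module.Basis (((ℤ ⊕ ℤ) ⊕ (Unit ⊕ Unit)) ⊕ ℤ) ℂ V)
    (br : V →ₗ[ℂ] V →ₗ[ℂ] V)
    (L : ℤ → V) (W : ℤ → V) (C1 : V) (C2 : V) (Q : ℤ → V)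
    (hLdef : ∀ m : ℤ, L m = bV (Sum.inl (Sum.inl (Sum.inl m))))
    (hWdef : ∀ m : ℤ, W m = bV (Sum.inl (Sum.inl (Sum.inr m))))
    (hC1def : C1 = bV (Sum.inl (Sum.inr (Sum.inl ()))))
    (hC2def : C2 = bV (Sum.inl (Sum.inr (Sum.inr ()))))
    (hQdef : ∀ k : ℤ, Q k = bV (Sum.inr k))
    (Vsub : ZMod 2 → Submodule ℂ V)
    (hV0 : Vsub 0 = Submodule.span ℂ (Set.range (fun i : (ℤ ⊕ ℤ) ⊕ (Unit ⊕ Unit) => bV (Sum.inl i))))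
    (hV1 : Vsub 1 = Submodule.span ℂ (Set.range (fun j : ℤ => bV (Sum.inr j))))
    (sgn : ZMod 2 → ℂ) (hsgn : ∀ p : ZMod 2, sgn p = if p = 1 then -1 else 1)
    (hLL : ∀ m n : ℤ, br (L m) (L n) = ((m : ℂ) - n) • L (m + n) +
      (if m + n = 0 then ((m : ℂ) ^ 3 - m) / 12 else 0) • C1)
    (hLW : ∀ m n : ℤ, br (L m) (W n) = ((m : ℂ) - n) • W (m + n) +
      (if m + n = 0 then ((m : ℂ) ^ 3 - m) / 12 else 0) • C2)
    (hQQ : ∀ k l : ℤ, br (Q k) (Q l) = (2 : ℂ) • W (k + l + 1) +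
      (if k + l + 1 = 0 then (((k : ℂ) + 1 / 2) ^ 2 - 1 / 4) / 3 else 0) • C2)
    (hLQ : ∀ m k : ℤ, br (L m) (Q k) = ((m : ℂ) / 2 - ((k : ℂ) + 1 / 2)) • Q (m + k))
    (hWW : ∀ m n : ℤ, br (W m) (W n) = 0)
    (hWQ : ∀ m k : ℤ, br (W m) (Q k) = 0)
    (hC1x : ∀ x : V, br C1 x = 0)
    (hC2x : ∀ x : V, br C2 x = 0)
    (hskew : ∀ p q : ZMod 2, ∀ x ∈ Vsub p, ∀ y ∈ Vsub q,
      br x y = (-(sgn (p * q))) • br y x)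
    (circ : V →ₗ[ℂ] V →ₗ[ℂ] V)
    (hcomm : ∀ p q : ZMod 2, ∀ x ∈ Vsub p, ∀ y ∈ Vsub q, circ x y = sgn (p * q) • circ y x)
    (hpost1 : ∀ p q t : ZMod 2, ∀ x ∈ Vsub p, ∀ y ∈ Vsub q, ∀ z ∈ Vsub t,
      circ (br x y) z = circ x (circ y z) - sgn (p * q) • circ y (circ x z))
    (hpost2 : ∀ p q t : ZMod 2, ∀ x ∈ Vsub p, ∀ y ∈ Vsub q, ∀ z ∈ Vsub t,
      circ x (br y z) = br (circ x y) z + sgn (p * q) • br y (circ x z)) :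
    ∀ x y : V, circ x y = 0 :=
  let B : SuperBMS3 V :=
    { bV, br, L, W, C1, C2, Q, L_eq := hLdef, W_eq := hWdef, C1_eq := hC1def, C2_eq := hC2def,
      Q_eq := hQdef, grade := Vsub, grade_zero := hV0, grade_one := hV1, sgn, sgn_eq := hsgn,
      br_L_L := hLL, br_L_W := hLW, br_Q_Q := hQQ, br_L_Q := hLQ, br_W_W := hWW, br_W_Q := hWQ,
      br_C1_left := hC1x, br_C2_left := hC2x, br_supercomm := hskew }
  SuperBMS3.CommPostLie.circ_eq_zero (B := B)
    { circ, circ_supercomm := hcomm, circ_br_left := hpost1, circ_br_right := hpost2 }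
end

section
/- Every commutative post-Lie superalgebra structure ∘ on the Heisenberg–Virasoro superalgebra S is trivial, i.e. x ∘ y = 0 for all x, y ∈ S. -/
/-!
Let `D = L₀ ∘ ·`, and let `wt` be the weight, so that `[L₀, e] = -wt(e) e` on basis vectors.
Commutativity and the second post-Lie identity give `[L₀, x ∘ y] = -wt(y) (x ∘ y) - [D x, y]`;
read in coordinates, this controls every product through `D`. Applied to `G_k ∘ G_k = 0` it puts
`D G_k` into `span {H, C}`, and comparing the two ways of computing `L₁ ∘ G_k = G_k ∘ L₁` then
forces `D G_k = 0`, whence `D H_n = 0` and `D L_m ∈ span {H, C}` by the Leibniz rule.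
Symmetrising, `(m - wt y) (L_m ∘ y) = [D L_m, y] - [D y, L_m]` kills `L_m ∘ G_k` and `L_m ∘ H_n`
for `n ≠ m` and puts `L_m ∘ L_n` into `span {H, C}` for `n ≠ m`; the post-Lie identities then
give `L_m ∘ · = 0`, central elements acting trivially because `S` is perfect. Finally the first
post-Lie identity makes `x ∘ ·` vanish for every `x` of nonzero weight, as `x ∈ ℂ [L₀, x]`.
-/

namespace HVS

abbrev Idx : Type := ((ℤ ⊕ ℤ) ⊕ Unit) ⊕ ℤ
abbrev LI (m : ℤ) : Idx := Sum.inl (Sum.inl (Sum.inl m))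
abbrev HI (m : ℤ) : Idx := Sum.inl (Sum.inl (Sum.inr m))
abbrev CI : Idx := Sum.inl (Sum.inr ())
-- `GI k` is the index of `G_{k + 1/2}`.
abbrev GI (k : ℤ) : Idx := Sum.inr k

noncomputable def weight : Idx → ℂ
  | Sum.inl (Sum.inl (Sum.inl m)) => m
  | Sum.inl (Sum.inl (Sum.inr m)) => m
  | Sum.inl (Sum.inr _) => 0
  | Sum.inr k => k + 1 / 2

lemma intCast_add_half_ne (a b : ℤ) : (a : ℂ) + 1 / 2 ≠ b := by
  intro h
  have h2 : ((2 * a + 1 : ℤ) : ℂ) = ((2 * b : ℤ) : ℂ) := by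
    push_cast; linear_combination 2 * h
  have h3 : 2 * a + 1 = 2 * b := by exact_mod_cast h2
  omega

lemma repr_map_eq_mul_repr {ι κ R M N : Type*} [CommSemiring R]
    [AddCommMonoid M] [Module R M] [AddCommMonoid N] [Module R N]
    (b : Module.Basis ι R M) (b' : Module.Basis κ R N) (T : M →ₗ[R] N)
    {c : κ} {ι₀ : ι} {a : R}
    (h₀ : b'.repr (T (b ι₀)) c = a) (h : ∀ i ≠ ι₀, b'.repr (T (b i)) c = 0) (v : M) :
    b'.repr (T v) c = a * b.repr v ι₀ := by
  classical
  have key : (b'.coord c).comp T = a • b.coord ι₀ := b.ext fun i => by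
    rcases eq_or_ne i ι₀ with rfl | hi
    · simp [h₀]
    · simp [h i hi, hi.symm]
  simpa using LinearMap.congr_fun key v

structure HVSuperalgebra (V : Type) [AddCommGroup V] [Module ℂ V] where
  bV : Module.Basis Idx ℂ V
  br : V →ₗ[ℂ] V →ₗ[ℂ] V
  Vsub : ZMod 2 → Submodule ℂ V
  sgn : ZMod 2 → ℂ
  hV0 : Vsub 0 = Submodule.span ℂ (Set.range (fun i : (ℤ ⊕ ℤ) ⊕ Unit => bV (Sum.inl i)))
  hV1 : Vsub 1 = Submodule.span ℂ (Set.range (fun j : ℤ => bV (Sum.inr j)))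
  hsgn : ∀ p : ZMod 2, sgn p = if p = 1 then -1 else 1
  hLL : ∀ m n : ℤ, br (bV (LI m)) (bV (LI n)) = ((m : ℂ) - n) • bV (LI (m + n)) +
      (if m + n = 0 then ((m : ℂ) ^ 3 - m) / 12 else 0) • bV CI
  hLH : ∀ m n : ℤ, br (bV (LI m)) (bV (HI n)) = (-(n : ℂ)) • bV (HI (m + n))
  hLG : ∀ m k : ℤ, br (bV (LI m)) (bV (GI k)) = (-((k : ℂ) + 1 / 2)) • bV (GI (m + k))
  hGG : ∀ k l : ℤ, br (bV (GI k)) (bV (GI l)) = (2 : ℂ) • bV (HI (k + l + 1))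
  hHH : ∀ m n : ℤ, br (bV (HI m)) (bV (HI n)) = 0
  hHG : ∀ m k : ℤ, br (bV (HI m)) (bV (GI k)) = 0
  hxC : ∀ x : V, br x (bV CI) = 0
  hskew : ∀ p q : ZMod 2, ∀ x ∈ Vsub p, ∀ y ∈ Vsub q, br x y = (-(sgn (p * q))) • br y x

structure CommPostLieHVS (V : Type) [AddCommGroup V] [Module ℂ V] extends HVSuperalgebra V where
  circ : V →ₗ[ℂ] V →ₗ[ℂ] V
  hcomm : ∀ p q : ZMod 2, ∀ x ∈ Vsub p, ∀ y ∈ Vsub q, circ x y = sgn (p * q) • circ y x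
  hpost1 : ∀ p q t : ZMod 2, ∀ x ∈ Vsub p, ∀ y ∈ Vsub q, ∀ z ∈ Vsub t,
      circ (br x y) z = circ x (circ y z) - sgn (p * q) • circ y (circ x z)
  hpost2 : ∀ p q t : ZMod 2, ∀ x ∈ Vsub p, ∀ y ∈ Vsub q, ∀ z ∈ Vsub t,
      circ x (br y z) = br (circ x y) z + sgn (p * q) • br y (circ x z)

namespace HVSuperalgebra

variable {V : Type} [AddCommGroup V] [Module ℂ V] (S : HVSuperalgebra V)

lemma sgn_zero : S.sgn 0 = 1 := by simp [S.hsgn]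

lemma sgn_one : S.sgn 1 = -1 := by simp [S.hsgn]

lemma bV_inl_mem (z : (ℤ ⊕ ℤ) ⊕ Unit) : S.bV (Sum.inl z) ∈ S.Vsub 0 := by
  rw [S.hV0]; exact Submodule.subset_span ⟨z, rfl⟩

lemma bV_L_mem (m : ℤ) : S.bV (LI m) ∈ S.Vsub 0 := S.bV_inl_mem _

lemma bV_G_mem (k : ℤ) : S.bV (GI k) ∈ S.Vsub 1 := by
  rw [S.hV1]; exact Submodule.subset_span ⟨k, rfl⟩

lemma exists_bV_mem (i : Idx) : ∃ p, S.bV i ∈ S.Vsub p := by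
  rcases i with z | k
  exacts [⟨0, S.bV_inl_mem z⟩, ⟨1, S.bV_G_mem k⟩]

lemma br_bV_eq_neg_of_mem_even {x : V} (hx : x ∈ S.Vsub 0) (j : Idx) :
    S.br (S.bV j) x = -S.br x (S.bV j) := by
  obtain ⟨p, hp⟩ := S.exists_bV_mem j
  rw [S.hskew p 0 _ hp x hx, mul_zero, S.sgn_zero, neg_one_smul]

lemma br_H_L (n m : ℤ) : S.br (S.bV (HI n)) (S.bV (LI m)) = (n : ℂ) • S.bV (HI (n + m)) := by
  rw [S.br_bV_eq_neg_of_mem_even (S.bV_inl_mem _), S.hLH, add_comm, neg_smul, neg_neg]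

lemma br_G_L (k m : ℤ) :
    S.br (S.bV (GI k)) (S.bV (LI m)) = ((k : ℂ) + 1 / 2) • S.bV (GI (k + m)) := by
  rw [S.br_bV_eq_neg_of_mem_even (S.bV_inl_mem _), S.hLG, add_comm m k, neg_smul, neg_neg]

lemma br_G_H (k n : ℤ) : S.br (S.bV (GI k)) (S.bV (HI n)) = 0 := by
  rw [S.br_bV_eq_neg_of_mem_even (S.bV_inl_mem _), S.hHG, neg_zero]

lemma br_C_eq_zero : S.br (S.bV CI) = 0 :=
  S.bV.ext fun j => by
    simpa [S.hxC, eq_comm] using S.br_bV_eq_neg_of_mem_even (S.bV_inl_mem (Sum.inr ())) j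

lemma br_L_zero (i : Idx) : S.br (S.bV (LI 0)) (S.bV i) = (-weight i) • S.bV i := by
  rcases i with (((m | m) | ⟨⟩) | k)
  · rw [S.hLL]; simp [weight]
  · rw [S.hLH]; simp [weight]
  · rw [S.hxC]; simp [weight]
  · rw [S.hLG]; simp [weight]

lemma repr_br_L_zero (v : V) (c : Idx) :
    S.bV.repr (S.br (S.bV (LI 0)) v) c = -weight c * S.bV.repr v c :=
  repr_map_eq_mul_repr S.bV S.bV _ (by simp [S.br_L_zero])
    (fun i hi => by simp [S.br_L_zero, hi]) v

lemma repr_br_G_at_G (v : V) (k r : ℤ) :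
    S.bV.repr (S.br v (S.bV (GI k))) (GI r) = -((k : ℂ) + 1 / 2) * S.bV.repr v (LI (r - k)) := by
  refine repr_map_eq_mul_repr S.bV S.bV (S.br.flip (S.bV (GI k))) (by simp [S.hLG]) ?_ v
  rintro (((n | n) | ⟨⟩) | l) hn
  · have hne : n + k ≠ r := by simp only [ne_eq, Sum.inl.injEq] at hn; omega
    simp [S.hLG, hne]
  all_goals simp [S.hHG, S.br_C_eq_zero, S.hGG]

lemma repr_br_G_at_H (v : V) (k s : ℤ) :
    S.bV.repr (S.br v (S.bV (GI k))) (HI s) = 2 * S.bV.repr v (GI (s - k - 1)) := by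
  refine repr_map_eq_mul_repr S.bV S.bV (S.br.flip (S.bV (GI k)))
    (by simp [S.hGG, show s - k - 1 + k + 1 = s by ring]) ?_ v
  rintro (((n | n) | ⟨⟩) | l) hl
  · simp [S.hLG]
  · simp [S.hHG]
  · simp [S.br_C_eq_zero]
  · have hne : l + k + 1 ≠ s := by simp only [ne_eq, Sum.inr.injEq] at hl; omega
    simp [S.hGG, hne]

lemma repr_br_G_at_C (v : V) (k : ℤ) : S.bV.repr (S.br v (S.bV (GI k))) CI = 0 := by
  refine (repr_map_eq_mul_repr S.bV S.bV (S.br.flip (S.bV (GI k))) (ι₀ := CI)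
    (by simp [S.br_C_eq_zero]) ?_ v).trans (zero_mul _)
  rintro (((n | n) | ⟨⟩) | l) - <;> simp [S.hLG, S.hHG, S.br_C_eq_zero, S.hGG]

lemma repr_br_L_at_G (v : V) (m r : ℤ) :
    S.bV.repr (S.br v (S.bV (LI m))) (GI r) =
      ((r : ℂ) - m + 1 / 2) * S.bV.repr v (GI (r - m)) := by
  refine repr_map_eq_mul_repr S.bV S.bV (S.br.flip (S.bV (LI m)))
    (by simp [S.br_G_L]) ?_ v
  rintro (((n | n) | ⟨⟩) | l) hl
  · rw [LinearMap.flip_apply, S.hLL]; split_ifs <;> simp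
  · simp [S.br_H_L]
  · simp [S.br_C_eq_zero]
  · have hne : l + m ≠ r := by simp only [ne_eq, Sum.inr.injEq] at hl; omega
    simp [S.br_G_L, hne]

lemma repr_br_L_at_H (v : V) (m s : ℤ) :
    S.bV.repr (S.br v (S.bV (LI m))) (HI s) = ((s : ℂ) - m) * S.bV.repr v (HI (s - m)) := by
  refine repr_map_eq_mul_repr S.bV S.bV (S.br.flip (S.bV (LI m)))
    (by simp [S.br_H_L]) ?_ v
  rintro (((n | n) | ⟨⟩) | l) hn
  · rw [LinearMap.flip_apply, S.hLL]; split_ifs <;> simp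
  · have hne : n + m ≠ s := by simp only [ne_eq, Sum.inl.injEq, Sum.inr.injEq] at hn; omega
    simp [S.br_H_L, hne]
  · simp [S.br_C_eq_zero]
  · simp [S.br_G_L]

def spanHC : Submodule ℂ V := Submodule.span ℂ (S.bV '' (Set.range HI ∪ {CI}))

lemma mem_spanHC_iff {v : V} :
    v ∈ S.spanHC ↔ (∀ m, S.bV.repr v (LI m) = 0) ∧ ∀ k, S.bV.repr v (GI k) = 0 := by
  rw [spanHC, Module.Basis.mem_span_image]
  constructor
  · intro h
    refine ⟨fun m => ?_, fun k => ?_⟩ <;> by_contra hne <;>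
      simpa using h (Finsupp.mem_support_iff.mpr hne)
  · rintro ⟨hL, hG⟩ i hi
    rw [Finset.mem_coe, Finsupp.mem_support_iff] at hi
    rcases i with (((m | m) | ⟨⟩) | k)
    exacts [absurd (hL m) hi, Or.inl ⟨m, rfl⟩, Or.inr rfl, absurd (hG k) hi]

lemma mem_spanHC_of_br_G_eq_zero {v : V} {k : ℤ} (h : S.br v (S.bV (GI k)) = 0) :
    v ∈ S.spanHC := by
  refine S.mem_spanHC_iff.mpr ⟨fun m => ?_, fun j => ?_⟩
  · have hc := S.repr_br_G_at_G v k (m + k)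
    rw [h, add_sub_cancel_right, map_zero, Finsupp.zero_apply] at hc
    refine (mul_eq_zero.mp hc.symm).resolve_left (neg_ne_zero.mpr ?_)
    simpa using intCast_add_half_ne k 0
  · have hc := S.repr_br_G_at_H v k (j + k + 1)
    rw [h, show j + k + 1 - k - 1 = j by ring] at hc
    simpa using hc.symm

lemma br_mem_spanHC_of_mem {v : V} (hv : v ∈ S.spanHC) (m : ℤ) :
    S.br v (S.bV (LI m)) ∈ S.spanHC := by
  refine (Submodule.span_le (p := S.spanHC.comap (S.br.flip (S.bV (LI m)))) |>.mpr ?_) hv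
  rintro _ ⟨i, ⟨j, rfl⟩ | rfl, rfl⟩
  · simpa [S.br_H_L] using
      S.spanHC.smul_mem _ (Submodule.subset_span ⟨HI (j + m), by simp, rfl⟩)
  · simp [S.br_C_eq_zero]

lemma br_H_eq_zero_of_mem_spanHC {v : V} (hv : v ∈ S.spanHC) (n : ℤ) :
    S.br v (S.bV (HI n)) = 0 := by
  refine (Submodule.span_le (p := LinearMap.ker (S.br.flip (S.bV (HI n)))) |>.mpr ?_) hv
  rintro _ ⟨i, ⟨j, rfl⟩ | rfl, rfl⟩ <;> simp [S.hHH, S.br_C_eq_zero]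

lemma br_G_eq_zero_of_mem_spanHC {v : V} (hv : v ∈ S.spanHC) (k : ℤ) :
    S.br v (S.bV (GI k)) = 0 := by
  refine (Submodule.span_le (p := LinearMap.ker (S.br.flip (S.bV (GI k)))) |>.mpr ?_) hv
  rintro _ ⟨i, ⟨j, rfl⟩ | rfl, rfl⟩ <;> simp [S.hHG, S.br_C_eq_zero]

def center : Submodule ℂ V := Submodule.span ℂ (S.bV '' {HI 0, CI})

lemma br_eq_zero_of_mem_center {v : V} (hv : v ∈ S.center) (j : Idx) : S.br (S.bV j) v = 0 := by
  refine (Submodule.span_le (p := LinearMap.ker (S.br (S.bV j))) |>.mpr ?_) hv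
  rintro _ ⟨i, rfl | rfl, rfl⟩
  · rcases j with (((m | m) | ⟨⟩) | k)
    · simp [S.hLH]
    · simp [S.hHH]
    · simp [S.br_C_eq_zero]
    · simp [S.br_G_H]
  · simp [S.hxC]

lemma mem_center_of_forall_br_eq_zero {v : V} (h : ∀ j, S.br v (S.bV j) = 0) :
    v ∈ S.center := by
  obtain ⟨hL, hG⟩ := S.mem_spanHC_iff.mp (S.mem_spanHC_of_br_G_eq_zero (h (GI 0)))
  rw [center, Module.Basis.mem_span_image]
  intro i hi
  rw [Finset.mem_coe, Finsupp.mem_support_iff] at hi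
  rcases i with (((m | n) | ⟨⟩) | k)
  · exact absurd (hL m) hi
  · refine Or.inl (congrArg HI (by_contra fun hn => hi ?_))
    have hc := S.repr_br_L_at_H v 1 (n + 1)
    rw [h, add_sub_cancel_right] at hc
    simpa [hn] using hc.symm
  · exact Or.inr rfl
  · exact absurd (hG k) hi

lemma span_range_br_eq_top :
    Submodule.span ℂ (Set.range fun p : Idx × Idx => S.br (S.bV p.1) (S.bV p.2)) = ⊤ := by
  set W := Submodule.span ℂ (Set.range fun p : Idx × Idx => S.br (S.bV p.1) (S.bV p.2))
  have hbr : ∀ i j, S.br (S.bV i) (S.bV j) ∈ W := fun i j =>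
    Submodule.subset_span ⟨(i, j), rfl⟩
  have hwt : ∀ i, weight i ≠ 0 → S.bV i ∈ W := fun i hi => by
    simpa [S.br_L_zero, smul_smul, hi] using W.smul_mem (-weight i)⁻¹ (hbr (LI 0) i)
  have hL0 : S.bV (LI 0) ∈ W := by
    have := S.hLL 1 (-1)
    norm_num at this
    simpa [this, smul_smul] using W.smul_mem (1 / 2 : ℂ) (hbr (LI 1) (LI (-1)))
  rw [eq_top_iff, ← S.bV.span_eq, Submodule.span_le]
  rintro _ ⟨i, rfl⟩
  rcases i with (((m | n) | ⟨⟩) | k)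
  · rcases eq_or_ne m 0 with rfl | hm
    · exact hL0
    · exact hwt _ (by simpa [weight] using hm)
  · rcases eq_or_ne n 0 with rfl | hn
    · have := S.hGG 0 (-1)
      norm_num at this
      simpa [this, smul_smul] using W.smul_mem (1 / 2 : ℂ) (hbr (GI 0) (GI (-1)))
    · exact hwt _ (by simpa [weight] using hn)
  · have := S.hLL 2 (-2)
    norm_num at this
    have hC : S.bV CI =
        (2 : ℂ) • (S.br (S.bV (LI 2)) (S.bV (LI (-2))) - (4 : ℂ) • S.bV (LI 0)) := by
      rw [this]; module
    rw [hC]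
    exact W.smul_mem _ (W.sub_mem (hbr _ _) (W.smul_mem _ hL0))
  · exact hwt _ (by simpa [weight] using intCast_add_half_ne k 0)

end HVSuperalgebra

namespace CommPostLieHVS

variable {V : Type} [AddCommGroup V] [Module ℂ V] (P : CommPostLieHVS V)

lemma circ_comm_of_mem_even {x : V} (hx : x ∈ P.Vsub 0) (j : Idx) :
    P.circ (P.bV j) x = P.circ x (P.bV j) := by
  obtain ⟨p, hp⟩ := P.exists_bV_mem j
  rw [P.hcomm p 0 _ hp x hx, mul_zero, P.sgn_zero, one_smul]

lemma circ_G_self_eq_zero (k : ℤ) : P.circ (P.bV (GI k)) (P.bV (GI k)) = 0 := by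
  have h := P.hcomm 1 1 _ (P.bV_G_mem k) _ (P.bV_G_mem k)
  rw [mul_one, P.sgn_one, neg_one_smul, eq_neg_iff_add_eq_zero, ← two_smul ℂ] at h
  exact (smul_eq_zero.mp h).resolve_left two_ne_zero

lemma circ_leibniz_of_mem_even {x : V} (hx : x ∈ P.Vsub 0) (j l : Idx) :
    P.circ x (P.br (P.bV j) (P.bV l)) =
      P.br (P.circ x (P.bV j)) (P.bV l) + P.br (P.bV j) (P.circ x (P.bV l)) := by
  obtain ⟨p, hp⟩ := P.exists_bV_mem j
  obtain ⟨q, hq⟩ := P.exists_bV_mem l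
  rw [P.hpost2 0 p q x hx _ hp _ hq, zero_mul, P.sgn_zero, one_smul]

lemma circ_leibniz_bV_of_mem_even (i : Idx) {x : V} (hx : x ∈ P.Vsub 0) (l : Idx) :
    P.circ (P.bV i) (P.br x (P.bV l)) =
      P.br (P.circ (P.bV i) x) (P.bV l) + P.br x (P.circ (P.bV i) (P.bV l)) := by
  obtain ⟨p, hp⟩ := P.exists_bV_mem i
  obtain ⟨q, hq⟩ := P.exists_bV_mem l
  rw [P.hpost2 p 0 q _ hp x hx _ hq, mul_zero, P.sgn_zero, one_smul]

lemma circ_br_of_mem_even {x : V} (hx : x ∈ P.Vsub 0) (j l : Idx) :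
    P.circ (P.br x (P.bV j)) (P.bV l) =
      P.circ x (P.circ (P.bV j) (P.bV l)) - P.circ (P.bV j) (P.circ x (P.bV l)) := by
  obtain ⟨p, hp⟩ := P.exists_bV_mem j
  obtain ⟨q, hq⟩ := P.exists_bV_mem l
  rw [P.hpost1 0 p q x hx _ hp _ hq, zero_mul, P.sgn_zero, one_smul]

lemma circ_eq_zero_of_forall_br_eq_zero {z : V} (hz_even : z ∈ P.Vsub 0)
    (hz : ∀ j, P.br z (P.bV j) = 0) : P.circ z = 0 := by
  have hbr : P.br z = 0 := P.bV.ext fun j => by simpa using hz j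
  have hright : ∀ x y, P.br (P.circ (P.bV x) z) (P.bV y) = 0 := fun x y => by
    simpa [hz, hbr] using (P.circ_leibniz_bV_of_mem_even x hz_even y).symm
  have hleft : ∀ x y, P.br (P.bV y) (P.circ (P.bV x) z) = 0 := fun x y =>
    P.br_eq_zero_of_mem_center (P.mem_center_of_forall_br_eq_zero (hright x)) y
  refine LinearMap.ext_on_range P.span_range_br_eq_top fun ⟨x, y⟩ => ?_
  rw [P.circ_leibniz_of_mem_even hz_even, ← P.circ_comm_of_mem_even hz_even,
    ← P.circ_comm_of_mem_even hz_even, hright, hleft, add_zero, LinearMap.zero_apply]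

noncomputable abbrev D : V →ₗ[ℂ] V := P.circ (P.bV (LI 0))

lemma br_L_zero_circ (i j : Idx) :
    P.br (P.bV (LI 0)) (P.circ (P.bV i) (P.bV j)) =
      (-weight j) • P.circ (P.bV i) (P.bV j) - P.br (P.D (P.bV i)) (P.bV j) := by
  have h := P.circ_leibniz_bV_of_mem_even i (P.bV_L_mem 0) j
  rw [P.br_L_zero, map_smul, P.circ_comm_of_mem_even (P.bV_inl_mem _) i] at h
  linear_combination (norm := module) -h

lemma weight_sub_mul_repr_circ (i j c : Idx) :
    (weight j - weight c) * P.bV.repr (P.circ (P.bV i) (P.bV j)) c =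
      -P.bV.repr (P.br (P.D (P.bV i)) (P.bV j)) c := by
  have h := congrArg (fun v => P.bV.repr v c) (P.br_L_zero_circ i j)
  simp only [P.repr_br_L_zero, map_sub, map_smul, Finsupp.sub_apply, Finsupp.smul_apply,
    smul_eq_mul] at h
  linear_combination h

lemma sub_weight_smul_L_circ (m : ℤ) (j : Idx) :
    ((m : ℂ) - weight j) • P.circ (P.bV (LI m)) (P.bV j) =
      P.br (P.D (P.bV (LI m))) (P.bV j) - P.br (P.D (P.bV j)) (P.bV (LI m)) := by
  have h1 := P.br_L_zero_circ (LI m) j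
  have h2 := P.br_L_zero_circ j (LI m)
  rw [P.circ_comm_of_mem_even (P.bV_inl_mem _)] at h2
  simp only [weight] at h2
  linear_combination (norm := module) h2 - h1

lemma D_G_mem_spanHC (k : ℤ) : P.D (P.bV (GI k)) ∈ P.spanHC :=
  P.mem_spanHC_of_br_G_eq_zero (k := k)
    (by simpa [P.circ_G_self_eq_zero] using P.br_L_zero_circ (GI k) (GI k))

lemma repr_D_G_at_H (k t : ℤ) :
    ((k : ℂ) + 1 / 2 - t) * P.bV.repr (P.D (P.bV (GI k))) (HI t) =
      -2 * P.bV.repr (P.D (P.bV (LI 0))) (GI (t - k - 1)) := by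
  have h := P.weight_sub_mul_repr_circ (LI 0) (GI k) (HI t)
  rw [P.repr_br_G_at_H] at h
  simp only [weight] at h
  linear_combination h

lemma repr_D_L_at_G (m r : ℤ) :
    P.bV.repr (P.D (P.bV (LI m))) (GI r) = P.bV.repr (P.D (P.bV (LI 0))) (GI (r - m)) := by
  have h := P.weight_sub_mul_repr_circ (LI 0) (LI m) (GI r)
  rw [P.repr_br_L_at_G] at h
  simp only [weight] at h
  have hne : (m : ℂ) - (r + 1 / 2) ≠ 0 := sub_ne_zero.mpr (intCast_add_half_ne r m).symm
  exact mul_left_cancel₀ hne (by linear_combination h)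

lemma repr_D_G_at_H_eq_zero (k : ℤ) {t : ℤ} (ht : t ≠ 0) :
    P.bV.repr (P.D (P.bV (GI k))) (HI t) = 0 := by
  -- the coordinate of `L₁ ∘ G_k = G_k ∘ L₁` at `H_{t+1}`, computed from either side
  have h1 := P.weight_sub_mul_repr_circ (LI 1) (GI k) (HI (t + 1))
  have h2 := P.weight_sub_mul_repr_circ (GI k) (LI 1) (HI (t + 1))
  have h3 := P.repr_D_G_at_H k t
  rw [P.circ_comm_of_mem_even (P.bV_inl_mem _)] at h2
  rw [P.repr_br_G_at_H, P.repr_D_L_at_G, show t + 1 - k - 1 - 1 = t - k - 1 by ring] at h1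
  rw [P.repr_br_L_at_H, show t + 1 - 1 = t by ring] at h2
  simp only [weight] at h1 h2
  push_cast at h1 h2
  have hX : P.bV.repr (P.circ (P.bV (LI 1)) (P.bV (GI k))) (HI (t + 1)) =
      P.bV.repr (P.D (P.bV (GI k))) (HI t) :=
    mul_left_cancel₀ (Int.cast_ne_zero.mpr ht) (by linear_combination -h2)
  linear_combination h3 - h1 + ((k : ℂ) - 1 / 2 - t) * hX

lemma repr_D_L_zero_at_G (j : ℤ) : P.bV.repr (P.D (P.bV (LI 0))) (GI j) = 0 := by
  have h := P.repr_D_G_at_H (-j) 1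
  rw [P.repr_D_G_at_H_eq_zero (-j) one_ne_zero, show (1 : ℤ) - -j - 1 = j by ring] at h
  linear_combination h / 2

lemma D_G_eq_zero (k : ℤ) : P.D (P.bV (GI k)) = 0 := by
  obtain ⟨hL, hG⟩ := P.mem_spanHC_iff.mp (P.D_G_mem_spanHC k)
  refine P.bV.forall_coord_eq_zero_iff.mp fun c => ?_
  rw [Module.Basis.coord_apply]
  rcases c with (((m | t) | ⟨⟩) | r)
  · exact hL m
  · have h := P.repr_D_G_at_H k t
    rw [P.repr_D_L_zero_at_G, mul_zero] at h
    exact (mul_eq_zero.mp h).resolve_left (sub_ne_zero.mpr (intCast_add_half_ne k t))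
  · have h := P.weight_sub_mul_repr_circ (LI 0) (GI k) CI
    rw [P.repr_br_G_at_C, neg_zero] at h
    refine (mul_eq_zero.mp h).resolve_left ?_
    simpa [weight] using intCast_add_half_ne k 0
  · exact hG r

lemma D_H_eq_zero (n : ℤ) : P.D (P.bV (HI n)) = 0 := by
  have h := P.circ_leibniz_of_mem_even (P.bV_L_mem 0) (GI 0) (GI (n - 1))
  rw [P.hGG, show (0 : ℤ) + (n - 1) + 1 = n by ring, map_smul, P.D_G_eq_zero,
    P.D_G_eq_zero] at h
  simpa using h

lemma D_L_mem_spanHC (m : ℤ) : P.D (P.bV (LI m)) ∈ P.spanHC := by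
  have h := P.circ_leibniz_of_mem_even (P.bV_L_mem 0) (LI m) (GI 0)
  rw [P.hLG, map_smul, P.D_G_eq_zero, P.D_G_eq_zero] at h
  exact P.mem_spanHC_of_br_G_eq_zero (by simpa using h.symm)

lemma circ_C_eq_zero : P.circ (P.bV CI) = 0 :=
  P.circ_eq_zero_of_forall_br_eq_zero (P.bV_inl_mem _) fun j => by simp [P.br_C_eq_zero]

lemma circ_H_zero_eq_zero : P.circ (P.bV (HI 0)) = 0 := by
  refine P.circ_eq_zero_of_forall_br_eq_zero (P.bV_inl_mem _) fun j => ?_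
  rcases j with (((m | m) | ⟨⟩) | k)
  · simp [P.br_H_L]
  · exact P.hHH 0 m
  · exact P.hxC _
  · exact P.hHG 0 k

lemma circ_L_G_eq_zero (m k : ℤ) : P.circ (P.bV (LI m)) (P.bV (GI k)) = 0 := by
  have h := P.sub_weight_smul_L_circ m (GI k)
  rw [P.br_G_eq_zero_of_mem_spanHC (P.D_L_mem_spanHC m), P.D_G_eq_zero, map_zero,
    LinearMap.zero_apply, sub_zero] at h
  exact (smul_eq_zero.mp h).resolve_left (sub_ne_zero.mpr (intCast_add_half_ne k m).symm)

lemma circ_L_H_eq_zero_of_ne {m n : ℤ} (hmn : m ≠ n) :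
    P.circ (P.bV (LI m)) (P.bV (HI n)) = 0 := by
  have h := P.sub_weight_smul_L_circ m (HI n)
  rw [P.br_H_eq_zero_of_mem_spanHC (P.D_L_mem_spanHC m), P.D_H_eq_zero, map_zero,
    LinearMap.zero_apply, sub_zero] at h
  refine (smul_eq_zero.mp h).resolve_left ?_
  simpa [weight, sub_eq_zero] using hmn

lemma circ_L_L_mem_spanHC {m n : ℤ} (hmn : m ≠ n) :
    P.circ (P.bV (LI m)) (P.bV (LI n)) ∈ P.spanHC := by
  have h := P.sub_weight_smul_L_circ m (LI n)
  have hne : (m : ℂ) - weight (LI n) ≠ 0 := by simpa [weight, sub_eq_zero] using hmn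
  rw [← Submodule.smul_mem_iff _ hne, h]
  exact P.spanHC.sub_mem (P.br_mem_spanHC_of_mem (P.D_L_mem_spanHC m) n)
    (P.br_mem_spanHC_of_mem (P.D_L_mem_spanHC n) m)

lemma circ_L_H_self_eq_zero (m : ℤ) : P.circ (P.bV (LI m)) (P.bV (HI m)) = 0 := by
  obtain ⟨b, hb0, hbm⟩ : ∃ b : ℤ, b ≠ 0 ∧ b ≠ m :=
    ⟨|m| + 1, by positivity, by linarith [le_abs_self m]⟩
  have h := P.circ_leibniz_bV_of_mem_even (LI m) (P.bV_L_mem (m - b)) (HI b)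
  rw [P.hLH, sub_add_cancel, map_smul, P.br_H_eq_zero_of_mem_spanHC
    (P.circ_L_L_mem_spanHC (n := m - b) (by omega)), P.circ_L_H_eq_zero_of_ne hbm.symm, map_zero,
    add_zero] at h
  exact (smul_eq_zero.mp h).resolve_left (by simpa using hb0)

lemma circ_L_H_eq_zero (m n : ℤ) : P.circ (P.bV (LI m)) (P.bV (HI n)) = 0 := by
  rcases eq_or_ne m n with rfl | hmn
  exacts [P.circ_L_H_self_eq_zero m, P.circ_L_H_eq_zero_of_ne hmn]

lemma circ_L_eq_zero_of_mem_spanHC (m : ℤ) {v : V} (hv : v ∈ P.spanHC) :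
    P.circ (P.bV (LI m)) v = 0 := by
  refine (Submodule.span_le (p := LinearMap.ker (P.circ (P.bV (LI m)))) |>.mpr ?_) hv
  rintro _ ⟨i, ⟨n, rfl⟩ | rfl, rfl⟩
  · exact P.circ_L_H_eq_zero m n
  · simp [← P.circ_comm_of_mem_even (P.bV_inl_mem _), P.circ_C_eq_zero]

lemma circ_L_L_eq_zero (q p : ℤ) : P.circ (P.bV (LI q)) (P.bV (LI p)) = 0 := by
  obtain ⟨a, hap, hbp, hab⟩ : ∃ a : ℤ, a ≠ p ∧ q - a ≠ p ∧ a ≠ q - a := by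
    refine ⟨|q| + |p| + 1, ?_, ?_, ?_⟩ <;>
      linarith [le_abs_self q, neg_abs_le q, le_abs_self p, neg_abs_le p]
  have h := P.circ_br_of_mem_even (P.bV_L_mem a) (LI (q - a)) (LI p)
  rw [P.circ_L_eq_zero_of_mem_spanHC _ (P.circ_L_L_mem_spanHC hbp),
    P.circ_L_eq_zero_of_mem_spanHC _ (P.circ_L_L_mem_spanHC hap), sub_zero, P.hLL,
    add_sub_cancel, map_add, map_smul, map_smul, P.circ_C_eq_zero] at h
  simp only [LinearMap.smul_apply, smul_zero, add_zero] at h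
  exact (smul_eq_zero.mp h).resolve_left (sub_ne_zero.mpr (by exact_mod_cast hab))

lemma circ_L_eq_zero (m : ℤ) : P.circ (P.bV (LI m)) = 0 := P.bV.ext fun j => by
  rcases j with (((p | n) | ⟨⟩) | k)
  · exact P.circ_L_L_eq_zero m p
  · exact P.circ_L_H_eq_zero m n
  · simp [← P.circ_comm_of_mem_even (P.bV_inl_mem _), P.circ_C_eq_zero]
  · exact P.circ_L_G_eq_zero m k

lemma circ_eq_zero_of_weight_ne_zero {i : Idx} (hi : weight i ≠ 0) : P.circ (P.bV i) = 0 :=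
  P.bV.ext fun l => by
    have h := P.circ_br_of_mem_even (P.bV_L_mem 0) i l
    simpa [P.br_L_zero, P.circ_L_eq_zero, hi] using h

theorem circ_eq_zero : P.circ = 0 := P.bV.ext fun i => by
  rcases i with (((m | n) | ⟨⟩) | k)
  · exact P.circ_L_eq_zero m
  · rcases eq_or_ne n 0 with rfl | hn
    · exact P.circ_H_zero_eq_zero
    · exact P.circ_eq_zero_of_weight_ne_zero (by simpa [weight] using hn)
  · exact P.circ_C_eq_zero
  · exact P.circ_eq_zero_of_weight_ne_zero (by simpa [weight] using intCast_add_half_ne k 0)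

end CommPostLieHVS
end HVS

theorem postLie_HVS_trivial
    (V : Type) [AddCommGroup V] [Module ℂ V]
    (bV : Module.Basis (((ℤ ⊕ ℤ) ⊕ Unit) ⊕ ℤ) ℂ V)
    (br : V →ₗ[ℂ] V →ₗ[ℂ] V)
    (L : ℤ → V) (H : ℤ → V) (Cc : V) (G : ℤ → V)
    (hLdef : ∀ m : ℤ, L m = bV (Sum.inl (Sum.inl (Sum.inl m))))
    (hHdef : ∀ m : ℤ, H m = bV (Sum.inl (Sum.inl (Sum.inr m))))
    (hCdef : Cc = bV (Sum.inl (Sum.inr ())))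
    (hGdef : ∀ k : ℤ, G k = bV (Sum.inr k))
    (Vsub : ZMod 2 → Submodule ℂ V)
    (hV0 : Vsub 0 = Submodule.span ℂ (Set.range (fun i : (ℤ ⊕ ℤ) ⊕ Unit => bV (Sum.inl i))))
    (hV1 : Vsub 1 = Submodule.span ℂ (Set.range (fun j : ℤ => bV (Sum.inr j))))
    (sgn : ZMod 2 → ℂ) (hsgn : ∀ p : ZMod 2, sgn p = if p = 1 then -1 else 1)
    (hLL : ∀ m n : ℤ, br (L m) (L n) = ((m : ℂ) - n) • L (m + n) +
      (if m + n = 0 then ((m : ℂ) ^ 3 - m) / 12 else 0) • Cc)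
    (hLH : ∀ m n : ℤ, br (L m) (H n) = (-(n : ℂ)) • H (m + n))
    (hLG : ∀ m k : ℤ, br (L m) (G k) = (-((k : ℂ) + 1 / 2)) • G (m + k))
    (hGG : ∀ k l : ℤ, br (G k) (G l) = (2 : ℂ) • H (k + l + 1))
    (hHH : ∀ m n : ℤ, br (H m) (H n) = 0)
    (hHG : ∀ m k : ℤ, br (H m) (G k) = 0)
    (hxC : ∀ x : V, br x Cc = 0)
    (hskew : ∀ p q : ZMod 2, ∀ x ∈ Vsub p, ∀ y ∈ Vsub q,
      br x y = (-(sgn (p * q))) • br y x)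
    (circ : V →ₗ[ℂ] V →ₗ[ℂ] V)
    (hcomm : ∀ p q : ZMod 2, ∀ x ∈ Vsub p, ∀ y ∈ Vsub q, circ x y = sgn (p * q) • circ y x)
    (hpost1 : ∀ p q t : ZMod 2, ∀ x ∈ Vsub p, ∀ y ∈ Vsub q, ∀ z ∈ Vsub t,
      circ (br x y) z = circ x (circ y z) - sgn (p * q) • circ y (circ x z))
    (hpost2 : ∀ p q t : ZMod 2, ∀ x ∈ Vsub p, ∀ y ∈ Vsub q, ∀ z ∈ Vsub t,
      circ x (br y z) = br (circ x y) z + sgn (p * q) • br y (circ x z)) :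
    ∀ x y : V, circ x y = 0 := by
  simp only [hLdef, hHdef, hGdef, hCdef] at hLL hLH hLG hGG hHH hHG hxC
  have h : circ = 0 := HVS.CommPostLieHVS.circ_eq_zero
    { bV, br, circ, Vsub, sgn, hV0, hV1, hsgn, hLL, hLH, hLG, hGG, hHH, hHG, hxC, hskew, hcomm,
      hpost1, hpost2 }
  simp [h]
end
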